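/- arXiv:1704.01066 — 8 statements merged into one kernel-verified Lean document; each statement's English description precedes it below -/
import Mathlib

section
/- Let f : ℝ → ℝ be Lipschitz continuous with compact support. Then there exist a function H : ℝ → ℝ and a constant C > 0 such that for every u ∈ ℝ the principal value Hilbert transform of f at u exists, i.e. ∫_{{x ∈ ℝ : |u − x| ≥ ε}} f(x)/(u − x) dx converges to H(u) as ε → 0⁺, and moreover |H(u)| ≤ C (1 + u²)^{−1/2} for all u ∈ ℝ. -/
open MeasureTheory Filter Topology Metric Set

/-! Near `u`, replace `f x` by `f x - f u`. Since `x ↦ 1 / (u - x)` is odd about `u`, the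
subtracted term integrates to zero over every truncation `{ε ≤ |u - x| ≤ 1}`, and by the Lipschitz
bound what remains, `g_u = hilbertRegIntegrand f u`, is integrable and bounded by `K` on
`closedBall u 1`. So the truncated integrals converge to `H u = ∫ g_u`, with error at most `2Kε`.
Moreover `|H u| ≤ 2K + ‖f‖₁`, and once `u` is far from the support of `f`,
`H u = ∫ f x / (u - x)`, whence `|u| |H u| ≤ 2‖f‖₁`. -/

noncomputable def hilbertTrunc (f : ℝ → ℝ) (ε u : ℝ) : ℝ :=
  ∫ x in {x : ℝ | ε ≤ |u - x|}, f x / (u - x)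

open Classical in
noncomputable def hilbertRegIntegrand (f : ℝ → ℝ) (u x : ℝ) : ℝ :=
  if x ∈ closedBall u 1 then (f x - f u) / (u - x) else f x / (u - x)

lemma setOf_le_abs_sub_eq_compl_ball (u ε : ℝ) : {x : ℝ | ε ≤ |u - x|} = (ball u ε)ᶜ := by
  ext x
  simp [Real.dist_eq, abs_sub_comm]

-- No integrability is needed: reflection in `u` turns the integral, junk or not, into its negative.
lemma integral_compl_ball_inter_closedBall_div_sub_eq_zero (c u ε r : ℝ) :
    ∫ x in (ball u ε)ᶜ ∩ closedBall u r, c / (u - x) = 0 := by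
  set S := (ball u ε)ᶜ ∩ closedBall u r
  set F := S.indicator fun x => c / (u - x)
  have hS : MeasurableSet S := measurableSet_ball.compl.inter measurableSet_closedBall
  have hF : ∀ x, F (2 * u - x) = -F x := by
    intro x
    have hdist : dist (2 * u - x) u = dist x u := by
      simp only [Real.dist_eq, show 2 * u - x - u = -(x - u) by ring, abs_neg]
    have hmem : 2 * u - x ∈ S ↔ x ∈ S := by
      simp only [S, mem_inter_iff, mem_compl_iff, mem_ball, mem_closedBall, hdist]
    simp only [F]
    by_cases hx : x ∈ S
    · rw [indicator_of_mem (hmem.2 hx), indicator_of_mem hx,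
        show u - (2 * u - x) = -(u - x) by ring, div_neg]
    · rw [indicator_of_notMem (mt hmem.1 hx), indicator_of_notMem hx, neg_zero]
  have hreflect := integral_sub_left_eq_self F volume (2 * u)
  simp only [hF, integral_neg] at hreflect
  rw [← integral_indicator hS]
  linarith

lemma div_sub_eq_hilbertRegIntegrand_add_indicator (f : ℝ → ℝ) (u x : ℝ) :
    f x / (u - x) =
      hilbertRegIntegrand f u x + (closedBall u 1).indicator (fun x => f u / (u - x)) x := by
  by_cases hx : x ∈ closedBall u 1
  · rw [hilbertRegIntegrand, if_pos hx, indicator_of_mem hx, sub_div, sub_add_cancel]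
  · rw [hilbertRegIntegrand, if_neg hx, indicator_of_notMem hx, add_zero]

section Regularized

variable {f : ℝ → ℝ} {K : NNReal}

lemma measurable_hilbertRegIntegrand (hf : Continuous f) (u : ℝ) :
    Measurable (hilbertRegIntegrand f u) :=
  Measurable.ite measurableSet_closedBall
    ((hf.measurable.sub_const _).div (measurable_const.sub measurable_id))
    (hf.measurable.div (measurable_const.sub measurable_id))

lemma abs_hilbertRegIntegrand_le_of_mem_closedBall (hf : LipschitzWith K f) {u x : ℝ}
    (hx : x ∈ closedBall u 1) : |hilbertRegIntegrand f u x| ≤ K := by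
  rw [hilbertRegIntegrand, if_pos hx, abs_div]
  rcases eq_or_ne x u with rfl | hxu
  · simp
  · have hpos : 0 < |u - x| := abs_pos.2 (sub_ne_zero.2 hxu.symm)
    rw [div_le_iff₀ hpos, ← Real.dist_eq, ← Real.dist_eq, dist_comm u]
    exact hf.dist_le_mul x u

lemma abs_hilbertRegIntegrand_le (hf : LipschitzWith K f) (u x : ℝ) :
    |hilbertRegIntegrand f u x| ≤ (closedBall u 1).indicator (fun _ => (K : ℝ)) x + |f x| := by
  by_cases hx : x ∈ closedBall u 1
  · rw [indicator_of_mem hx]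
    linarith [abs_hilbertRegIntegrand_le_of_mem_closedBall hf hx, abs_nonneg (f x)]
  · have hfar : 1 < |u - x| := by
      rwa [mem_closedBall, not_le, Real.dist_eq, abs_sub_comm] at hx
    rw [hilbertRegIntegrand, if_neg hx, indicator_of_notMem hx, zero_add, abs_div]
    exact div_le_self (abs_nonneg _) hfar.le

lemma integrable_indicator_closedBall_const (u r c : ℝ) :
    Integrable ((closedBall u r).indicator fun _ => c) :=
  (integrableOn_const measure_closedBall_lt_top.ne).integrable_indicator measurableSet_closedBall

lemma integrable_hilbertRegIntegrand (hf : LipschitzWith K f) (hfi : Integrable f) (u : ℝ) :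
    Integrable (hilbertRegIntegrand f u) :=
  ((integrable_indicator_closedBall_const u 1 K).add hfi.abs).mono' (f := hilbertRegIntegrand f u)
    (measurable_hilbertRegIntegrand hf.continuous u).aestronglyMeasurable
    (ae_of_all _ (abs_hilbertRegIntegrand_le hf u))

lemma abs_integral_hilbertRegIntegrand_le (hf : LipschitzWith K f) (hfi : Integrable f) (u : ℝ) :
    |∫ x, hilbertRegIntegrand f u x| ≤ 2 * K + ∫ x, |f x| := by
  have h := norm_integral_le_of_norm_le (f := hilbertRegIntegrand f u)
    (g := fun x => (closedBall u 1).indicator (fun _ => (K : ℝ)) x + |f x|)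
    ((integrable_indicator_closedBall_const u 1 K).add hfi.abs)
    (ae_of_all _ (abs_hilbertRegIntegrand_le hf u))
  rwa [integral_add (integrable_indicator_closedBall_const u 1 K) hfi.abs,
    integral_indicator_const _ measurableSet_closedBall,
    Real.volume_real_closedBall zero_le_one, smul_eq_mul, mul_one, Real.norm_eq_abs] at h

lemma hilbertTrunc_eq_setIntegral_hilbertRegIntegrand (hf : LipschitzWith K f)
    (hfi : Integrable f) (u : ℝ) {ε : ℝ} (hε : 0 < ε) :
    hilbertTrunc f ε u = ∫ x in (ball u ε)ᶜ, hilbertRegIntegrand f u x := by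
  have hsing : IntegrableOn (fun x => f u / (u - x)) ((ball u ε)ᶜ ∩ closedBall u 1) := by
    refine ContinuousOn.integrableOn_compact
      ((isCompact_closedBall u 1).inter_left isOpen_ball.isClosed_compl) ?_
    refine continuousOn_const.div (continuous_sub_left u).continuousOn fun x hx => ?_
    rw [sub_ne_zero]
    rintro rfl
    exact hx.1 (mem_ball_self hε)
  have hind : IntegrableOn ((closedBall u 1).indicator fun x => f u / (u - x)) (ball u ε)ᶜ := by
    rw [integrableOn_indicator_iff measurableSet_closedBall, inter_comm]
    exact hsing
  rw [hilbertTrunc, setOf_le_abs_sub_eq_compl_ball]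
  simp_rw [div_sub_eq_hilbertRegIntegrand_add_indicator f u]
  rw [integral_add (integrable_hilbertRegIntegrand hf hfi u).integrableOn hind,
    setIntegral_indicator measurableSet_closedBall,
    integral_compl_ball_inter_closedBall_div_sub_eq_zero, add_zero]

lemma abs_setIntegral_compl_ball_sub_integral_le (hf : LipschitzWith K f) (hfi : Integrable f)
    (u : ℝ) {ε : ℝ} (hε : 0 ≤ ε) (hε1 : ε ≤ 1) :
    |(∫ x in (ball u ε)ᶜ, hilbertRegIntegrand f u x) - ∫ x, hilbertRegIntegrand f u x| ≤
      2 * K * ε := by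
  have hsplit := integral_add_compl measurableSet_ball (integrable_hilbertRegIntegrand hf hfi u)
    (s := ball u ε)
  have hbound := norm_setIntegral_le_of_norm_le_const (f := hilbertRegIntegrand f u)
    (measure_ball_lt_top (μ := volume)) fun x hx =>
    abs_hilbertRegIntegrand_le_of_mem_closedBall (f := f) hf
      (ball_subset_closedBall.trans (closedBall_subset_closedBall hε1) hx)
  rw [Real.volume_real_ball hε, Real.norm_eq_abs] at hbound
  rw [← hsplit, sub_add_cancel_right, abs_neg]
  linarith

lemma tendsto_hilbertTrunc (hf : LipschitzWith K f) (hfi : Integrable f) (u : ℝ) :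
    Tendsto (fun ε => hilbertTrunc f ε u) (𝓝[>] 0) (𝓝 (∫ x, hilbertRegIntegrand f u x)) := by
  have hsmall : ∀ᶠ ε in 𝓝[>] (0 : ℝ), ε ∈ Ioc 0 1 := Ioc_mem_nhdsGT one_pos
  have herr : Tendsto (fun ε : ℝ => 2 * K * ε) (𝓝[>] 0) (𝓝 0) := by
    simpa using (tendsto_id.const_mul (2 * (K : ℝ))).mono_left (nhdsWithin_le_nhds (a := (0 : ℝ)))
  rw [← tendsto_sub_nhds_zero_iff]
  refine squeeze_zero_norm' ?_ herr
  filter_upwards [hsmall] with ε hε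
  rw [hilbertTrunc_eq_setIntegral_hilbertRegIntegrand hf hfi u hε.1, Real.norm_eq_abs]
  exact abs_setIntegral_compl_ball_sub_integral_le hf hfi u hε.1.le hε.2

end Regularized

section FarFromSupport

variable {f : ℝ → ℝ} {R : ℝ}

lemma abs_le_of_support_subset_closedBall (hR : Function.support f ⊆ closedBall 0 R) {x : ℝ}
    (hx : f x ≠ 0) : |x| ≤ R := by
  simpa using hR hx

lemma hilbertRegIntegrand_eq_of_support_subset (hR : Function.support f ⊆ closedBall 0 R) {u : ℝ}
    (hu : 2 * R + 2 ≤ |u|) (x : ℝ) : hilbertRegIntegrand f u x = f x / (u - x) := by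
  by_cases hx : x ∈ closedBall u 1
  · have hfu : f u = 0 := by
      by_contra h
      linarith [abs_le_of_support_subset_closedBall hR h, abs_nonneg u]
    have hfx : f x = 0 := by
      by_contra h
      have hxR := abs_le_of_support_subset_closedBall hR h
      have hux : |u - x| ≤ 1 := by rwa [mem_closedBall, Real.dist_eq, abs_sub_comm] at hx
      linarith [abs_sub_abs_le_abs_sub u x, abs_nonneg x]
    rw [hilbertRegIntegrand, if_pos hx, hfu, hfx, sub_zero]
  · rw [hilbertRegIntegrand, if_neg hx]

lemma abs_div_sub_le_of_support_subset (hR : Function.support f ⊆ closedBall 0 R) {u : ℝ}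
    (hu : 2 * R ≤ |u|) (hu0 : u ≠ 0) (x : ℝ) : |f x / (u - x)| ≤ 2 * |f x| / |u| := by
  by_cases hfx : f x = 0
  · simp [hfx]
  have hxR := abs_le_of_support_subset_closedBall hR hfx
  have hux : |u| / 2 ≤ |u - x| := by linarith [abs_sub_abs_le_abs_sub u x]
  calc |f x / (u - x)| ≤ |f x| / (|u| / 2) := by
        rw [abs_div]
        exact div_le_div_of_nonneg_left (abs_nonneg _) (by positivity) hux
    _ = 2 * |f x| / |u| := by field_simp

lemma abs_mul_abs_integral_hilbertRegIntegrand_le (hfi : Integrable f)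
    (hR : Function.support f ⊆ closedBall 0 R) {u : ℝ} (hu : 2 * R + 2 ≤ |u|) :
    |u| * |∫ x, hilbertRegIntegrand f u x| ≤ 2 * ∫ x, |f x| := by
  have hf1 : 0 ≤ ∫ x, |f x| := integral_nonneg fun x => abs_nonneg (f x)
  rcases eq_or_ne u 0 with rfl | hu0
  · simpa using hf1
  have hbound := norm_integral_le_of_norm_le (f := fun x => f x / (u - x))
    ((hfi.abs.const_mul 2).div_const |u|)
    (ae_of_all _ (abs_div_sub_le_of_support_subset hR (by linarith) hu0))
  simp_rw [hilbertRegIntegrand_eq_of_support_subset hR hu]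
  rw [integral_div, integral_const_mul, Real.norm_eq_abs] at hbound
  calc |u| * |∫ x, f x / (u - x)| ≤ |u| * ((2 * ∫ x, |f x|) / |u|) :=
        mul_le_mul_of_nonneg_left hbound (abs_nonneg u)
    _ = 2 * ∫ x, |f x| := by field_simp

end FarFromSupport

lemma exists_abs_le_mul_one_add_sq_rpow (h : ℝ → ℝ) {A B T : ℝ} (hA : ∀ u, |h u| ≤ A)
    (hB : ∀ u, T ≤ |u| → |u| * |h u| ≤ B) :
    ∃ C : ℝ, 0 < C ∧ ∀ u, |h u| ≤ C * (1 + u ^ 2) ^ (-(1 : ℝ) / 2) := by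
  have hA0 : 0 ≤ A := (abs_nonneg _).trans (hA 0)
  have hB0 : 0 ≤ B := (mul_nonneg (abs_nonneg _) (abs_nonneg _)).trans
    (hB |T| ((le_abs_self T).trans_eq (abs_abs T).symm))
  refine ⟨A * (1 + |T|) + B + 1, by positivity, fun u => ?_⟩
  have hsqrt : √(1 + u ^ 2) ≤ 1 + |u| :=
    Real.sqrt_le_iff.2 ⟨by positivity, by nlinarith [sq_abs u, abs_nonneg u]⟩
  rw [neg_div, Real.rpow_neg (by positivity), ← Real.sqrt_eq_rpow, ← div_eq_mul_inv,
    le_div_iff₀ (by positivity)]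
  calc |h u| * √(1 + u ^ 2) ≤ |h u| * (1 + |u|) := mul_le_mul_of_nonneg_left hsqrt (abs_nonneg _)
    _ ≤ A * (1 + |T|) + B + 1 := by
      rcases le_or_gt T |u| with hu | hu
      · nlinarith [hB u hu, hA u, abs_nonneg T]
      · nlinarith [hA u, abs_nonneg u, abs_nonneg (h u), le_abs_self T]

/-- For a Lipschitz function `f` with compact support, the principal value Hilbert transform
`H(u) = lim_{ε→0⁺} ∫_{|u−x| ≥ ε} f(x)/(u−x) dx` exists at every point and satisfies
`|H(u)| ≤ C (1 + u²)^{−1/2}`. -/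
theorem hilbert_transform_exists_and_decays
    (f : ℝ → ℝ) (K : NNReal) (hf : LipschitzWith K f) (hsupp : HasCompactSupport f) :
    ∃ (H : ℝ → ℝ) (C : ℝ), 0 < C ∧ ∀ u : ℝ,
      Tendsto (fun ε : ℝ => ∫ x in {x : ℝ | ε ≤ |u - x|}, f x / (u - x))
        (nhdsWithin 0 (Set.Ioi 0)) (nhds (H u)) ∧
      |H u| ≤ C * (1 + u ^ 2) ^ (-(1:ℝ)/2) := by
  have hfi : Integrable f := hf.continuous.integrable_of_hasCompactSupport hsupp
  obtain ⟨R, hR⟩ := hsupp.isBounded.subset_closedBall 0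
  obtain ⟨C, hC, hdecay⟩ := exists_abs_le_mul_one_add_sq_rpow
    (fun u => ∫ x, hilbertRegIntegrand f u x) (abs_integral_hilbertRegIntegrand_le hf hfi)
    (fun _ hu => abs_mul_abs_integral_hilbertRegIntegrand_le hfi
      ((subset_tsupport f).trans hR) hu)
  exact ⟨_, C, hC, fun u => ⟨tendsto_hilbertTrunc hf hfi u, hdecay u⟩⟩
end

section
/- Let M > 0 and let f : ℝ → ℝ be Lebesgue integrable and odd (f(−x) = −f(x) for all x) with f(x) = 0 whenever |x| > M. Then for every u ∈ ℝ with |u| ≥ 2M one has |∫_ℝ f(x)/(u − x) dx| ≤ (8M/(3u²)) ∫₀^M |f(x)| dx. -/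
open MeasureTheory

/-- For an odd integrable function `f` supported in `[−M, M]` and `|u| ≥ 2M`,
`|∫ f(x)/(u−x) dx| ≤ (8M/(3u²)) ∫₀^M |f(x)| dx`. -/
theorem abs_integral_odd_cauchy_kernel_le
    (M : ℝ) (hM : 0 < M) (f : ℝ → ℝ) (hf : Integrable f)
    (hodd : ∀ x : ℝ, f (-x) = - f x) (hsupp : ∀ x : ℝ, M < |x| → f x = 0)
    (u : ℝ) (hu : 2 * M ≤ |u|) :
    |∫ x : ℝ, f x / (u - x)| ≤ (8 * M / (3 * u ^ 2)) * ∫ x in (0:ℝ)..M, |f x| := by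
  have hu0 : 0 < |u| := lt_of_lt_of_le (by linarith) hu
  have hune : u ≠ 0 := by
    intro h; rw [h] at hu0; simp at hu0
  have hu2 : (0:ℝ) < u ^ 2 := by positivity
  have h4M : 4 * M ^ 2 ≤ u ^ 2 := by
    have : (2 * M) ^ 2 ≤ |u| ^ 2 := by
      apply pow_le_pow_left₀ (by positivity) hu
    rw [sq_abs] at this; nlinarith
  -- pointwise bounds for integrability
  have hsub : ∀ x : ℝ, |f x / (u - x)| ≤ |f x| / M := by
    intro x
    by_cases hfx : f x = 0
    · simp [hfx]
    · have hx : |x| ≤ M := by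
        by_contra h; exact hfx (hsupp x (lt_of_not_ge h))
      have hux : M ≤ |u - x| := by
        have h1 := abs_sub_abs_le_abs_sub u x
        linarith
      rw [abs_div]
      exact div_le_div₀ (abs_nonneg _) le_rfl hM hux
  have hadd : ∀ x : ℝ, |f x / (u + x)| ≤ |f x| / M := by
    intro x
    by_cases hfx : f x = 0
    · simp [hfx]
    · have hx : |x| ≤ M := by
        by_contra h; exact hfx (hsupp x (lt_of_not_ge h))
      have hux : M ≤ |u + x| := by
        have h1 := abs_sub_abs_le_abs_sub u (-x)
        rw [abs_neg, sub_neg_eq_add] at h1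
        linarith
      rw [abs_div]
      exact div_le_div₀ (abs_nonneg _) le_rfl hM hux
  have hmeas1 : AEStronglyMeasurable (fun x => f x / (u - x)) volume := by
    simp_rw [div_eq_mul_inv]
    exact hf.aestronglyMeasurable.mul
      ((measurable_const.sub measurable_id).inv.aestronglyMeasurable)
  have hmeas2 : AEStronglyMeasurable (fun x => f x / (u + x)) volume := by
    simp_rw [div_eq_mul_inv]
    exact hf.aestronglyMeasurable.mul
      ((measurable_const.add measurable_id).inv.aestronglyMeasurable)
  have hint1 : Integrable (fun x => f x / (u - x)) := by
    refine Integrable.mono' (hf.abs.div_const M) hmeas1 ?_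
    filter_upwards with x
    rw [Real.norm_eq_abs]; exact hsub x
  have hint2 : Integrable (fun x => f x / (u + x)) := by
    refine Integrable.mono' (hf.abs.div_const M) hmeas2 ?_
    filter_upwards with x
    rw [Real.norm_eq_abs]; exact hadd x
  -- split the integral at 0 and fold the negative part over
  have hsplit : (∫ x : ℝ, f x / (u - x)) =
      ∫ x in Set.Ioi (0:ℝ), (f x / (u - x) - f x / (u + x)) := by
    rw [← intervalIntegral.integral_Iic_add_Ioi hint1.integrableOn hint1.integrableOn]
    have hfold : (∫ x in Set.Iic (0:ℝ), f x / (u - x)) =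
        ∫ x in Set.Ioi (0:ℝ), -(f x / (u + x)) := by
      have h1 : (∫ x in Set.Ioi (0:ℝ), f (-x) / (u - (-x))) =
          ∫ x in Set.Iic (-(0:ℝ)), f x / (u - x) :=
        integral_comp_neg_Ioi 0 (fun x => f x / (u - x))
      rw [neg_zero] at h1
      rw [← h1]
      congr 1
      funext x
      rw [hodd x, sub_neg_eq_add, neg_div]
    rw [hfold, add_comm, integral_neg, ← sub_eq_add_neg,
      ← integral_sub hint1.integrableOn hint2.integrableOn]
  rw [hsplit]
  -- bound the integrand
  have hptwise : ∀ x ∈ Set.Ioi (0:ℝ),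
      |f x / (u - x) - f x / (u + x)| ≤ 8 * M / (3 * u ^ 2) * |f x| := by
    intro x hx
    simp only [Set.mem_Ioi] at hx
    by_cases hfx : f x = 0
    · simp [hfx]
    · have hxM : |x| ≤ M := by
        by_contra h; exact hfx (hsupp x (lt_of_not_ge h))
      have hxM' : x ≤ M := le_trans (le_abs_self x) hxM
      have hpos : 0 < u ^ 2 - x ^ 2 := by nlinarith [abs_nonneg x, sq_abs x]
      have h34 : 3 * u ^ 2 / 4 ≤ u ^ 2 - x ^ 2 := by nlinarith [sq_abs x]
      have hne1 : u - x ≠ 0 := by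
        intro h
        have : u = x := by linarith
        rw [this] at hu0
        nlinarith [sq_abs x]
      have hne2 : u + x ≠ 0 := by
        intro h
        have : x = -u := by linarith
        rw [this] at hxM
        rw [abs_neg] at hxM
        nlinarith
      have heq : f x / (u - x) - f x / (u + x) = f x * (2 * x) / ((u - x) * (u + x)) := by
        field_simp
        ring
      rw [heq, abs_div, abs_mul]
      have hden : |(u - x) * (u + x)| = u ^ 2 - x ^ 2 := by
        rw [abs_of_pos (by nlinarith)]
        ring
      rw [hden]
      have h2x : |2 * x| ≤ 2 * M := by
        rw [abs_of_pos (by linarith)]; linarith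
      calc |f x| * |2 * x| / (u ^ 2 - x ^ 2)
          ≤ |f x| * (2 * M) / (3 * u ^ 2 / 4) := by
            apply div_le_div₀ (by positivity)
              (mul_le_mul le_rfl h2x (abs_nonneg _) (abs_nonneg _))
              (by positivity) h34
        _ = 8 * M / (3 * u ^ 2) * |f x| := by
            field_simp
            ring
  have hbnd : |∫ x in Set.Ioi (0:ℝ), (f x / (u - x) - f x / (u + x))| ≤
      ∫ x in Set.Ioi (0:ℝ), 8 * M / (3 * u ^ 2) * |f x| := by
    rw [← Real.norm_eq_abs]
    apply norm_integral_le_of_norm_le ((hf.abs.const_mul _).integrableOn)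
    filter_upwards [ae_restrict_mem measurableSet_Ioi] with x hx
    simpa [Real.norm_eq_abs] using hptwise x hx
  have hfin : (∫ x in Set.Ioi (0:ℝ), 8 * M / (3 * u ^ 2) * |f x|) =
      8 * M / (3 * u ^ 2) * ∫ x in (0:ℝ)..M, |f x| := by
    rw [integral_const_mul]
    congr 1
    rw [intervalIntegral.integral_of_le hM.le]
    rw [← Set.Ioc_union_Ioi_eq_Ioi hM.le,
      setIntegral_union (Set.Ioc_disjoint_Ioi le_rfl) measurableSet_Ioi
        hf.abs.integrableOn hf.abs.integrableOn]
    have hzero : (∫ x in Set.Ioi M, |f x|) = 0 := by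
      rw [setIntegral_congr_fun measurableSet_Ioi
        (fun x hx => by
          rw [hsupp x (lt_of_lt_of_le hx (le_abs_self x)), abs_zero])]
      simp
    rw [hzero, add_zero]
  rw [← hfin]
  exact hbnd
end

section
/- Let d ≥ 2, let f : ℝ^d → [0, ∞) be continuous with compact support, let a₁, a₂ ∈ ℝ^d with a₁ ≤ a₂ componentwise, and let c > 0 be such that f(b) ≥ c for every b in the hyperrectangle [a₁, a₂] = {b ∈ ℝ^d : a₁ ≤ b ≤ a₂ componentwise}. Then there exists δ > 0 such that, with c' = (c/2)(2δ)^{d−1} d^{(1−d)/2} > 0, for every h ∈ (0, 1], every t ∈ ℝ^d whose i-th coordinate satisfies (a₁)_i + h ≤ t_i ≤ (a₂)_i − h for all i, every θ ∈ S^{d−1}, and every s ∈ ℝ with h|s| < δ/√d, one has Rf(⟨t, θ⟩ + hs, θ) ≥ c'. -/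
open MeasureTheory
open scoped RealInnerProductSpace

/-- The Radon transform of `f : ℝ^d → ℝ`. -/
noncomputable def radon (d : ℕ) (f : EuclideanSpace ℝ (Fin d) → ℝ) (s : ℝ)
    (θ : EuclideanSpace ℝ (Fin d)) : ℝ :=
  ∫ w : ((ℝ ∙ θ)ᗮ : Submodule ℝ (EuclideanSpace ℝ (Fin d))), f (s • θ + w)

/-! The rectangle is compact and `f > c / 2` on it, so `f > c / 2` on a closed `δ`-neighbourhood
of it. The hyperplane `⟪x, θ⟫ = ⟪t, θ⟫ + h s` passes within `h |s| < δ / √d` of `t`. Inside it,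
the cube of side `2 δ / √d` (in an orthonormal basis) centred at the foot of `t` stays within
distance `√(h² s² + (d - 1) δ² / d) ≤ δ` of `t`, so integrating `f ≥ c / 2` over that cube bounds
the Radon transform below by `c / 2 · (2 δ / √d) ^ (d - 1)`, which is the claimed constant. -/

open Set

section
variable {ι F : Type*} [Fintype ι] [NormedAddCommGroup F] [InnerProductSpace ℝ F]

theorem OrthonormalBasis.volume_setOf_repr_mem_Icc [FiniteDimensional ℝ F] [MeasurableSpace F]
    [BorelSpace F] (b : OrthonormalBasis ι ℝ F) (l u : ι → ℝ) :
    volume {w : F | ∀ j, b.repr w j ∈ Icc (l j) (u j)} = ∏ j, ENNReal.ofReal (u j - l j) := by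
  have hbox : MeasurableSet (univ.pi fun j => Icc (l j) (u j)) :=
    MeasurableSet.univ_pi fun _ => measurableSet_Icc
  let e := (MeasurableEquiv.toLp 2 (ι → ℝ)).symm
  have hset : {w : F | ∀ j, b.repr w j ∈ Icc (l j) (u j)} =
      b.repr ⁻¹' (e ⁻¹' univ.pi fun j => Icc (l j) (u j)) := by
    ext; simp only [mem_preimage, mem_univ_pi]; rfl
  rw [hset,
    b.measurePreserving_repr.measure_preimage (hbox.preimage e.measurable).nullMeasurableSet,
    (EuclideanSpace.volume_preserving_symm_measurableEquiv_toLp ι).measure_preimage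
      hbox.nullMeasurableSet, volume_pi_pi]
  simp only [Real.volume_Icc]

theorem OrthonormalBasis.norm_sq_le_card_mul_sq (b : OrthonormalBasis ι ℝ F) {v : F} {r : ℝ}
    (hv : ∀ j, |b.repr v j| ≤ r) : ‖v‖ ^ 2 ≤ Fintype.card ι * r ^ 2 := by
  rw [← b.repr.norm_map, EuclideanSpace.norm_sq_eq, ← nsmul_eq_mul]
  exact Finset.sum_le_card_nsmul _ _ _ fun j _ => pow_le_pow_left₀ (norm_nonneg _) (hv j) 2

theorem norm_smul_add_sub_sq {θ : F} (hθ : ‖θ‖ = 1) {w : F} (hw : ⟪θ, w⟫ = 0) (t : F) (s : ℝ) :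
    ‖s • θ + w - t‖ ^ 2 = (s - ⟪t, θ⟫) ^ 2 + ‖w - (t - ⟪t, θ⟫ • θ)‖ ^ 2 := by
  have horth : ⟪(s - ⟪t, θ⟫) • θ, w - (t - ⟪t, θ⟫ • θ)⟫ = 0 := by
    simp only [real_inner_smul_left, inner_sub_right, hw, real_inner_smul_right,
      real_inner_self_eq_norm_sq, hθ, real_inner_comm t]
    ring
  rw [show s • θ + w - t = (s - ⟪t, θ⟫) • θ + (w - (t - ⟪t, θ⟫ • θ)) by module, sq, sq, sq,
    norm_add_sq_eq_norm_sq_add_norm_sq_real horth, norm_smul, hθ, Real.norm_eq_abs, mul_one,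
    abs_mul_abs_self]

theorem dist_smul_add_le_sqrt_mul {θ : F} (hθ : ‖θ‖ = 1) {w : F} (hw : ⟪θ, w⟫ = 0) {t : F}
    {s r : ℝ} (hs : |s - ⟪t, θ⟫| ≤ r) {n : ℕ} (hwt : ‖w - (t - ⟪t, θ⟫ • θ)‖ ^ 2 ≤ n * r ^ 2) :
    dist (s • θ + w) t ≤ √(n + 1) * r := by
  have hsr : (s - ⟪t, θ⟫) ^ 2 ≤ r ^ 2 := sq_le_sq' (abs_le.mp hs).1 (abs_le.mp hs).2
  have hr : 0 ≤ r := (abs_nonneg _).trans hs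
  refine le_of_pow_le_pow_left₀ two_ne_zero (by positivity) ?_
  rw [dist_eq_norm, norm_smul_add_sub_sq hθ hw, mul_pow, Real.sq_sqrt (by positivity)]
  linarith

theorem Submodule.finrank_orthogonal_span_singleton_add_one [FiniteDimensional ℝ F] {v : F}
    (hv : v ≠ 0) : Module.finrank ℝ (ℝ ∙ v)ᗮ + 1 = Module.finrank ℝ F := by
  rw [← (ℝ ∙ v).finrank_add_finrank_orthogonal, finrank_span_singleton hv, add_comm]

end

theorem Real.rpow_one_sub_natCast_div_two {x : ℝ} (hx : 0 ≤ x) {n : ℕ} (hn : 1 ≤ n) :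
    x ^ ((1 - (n : ℝ)) / 2) = (√x ^ (n - 1))⁻¹ := by
  rw [show (1 - (n : ℝ)) / 2 = 1 / 2 * -((n - 1 : ℕ) : ℝ) by push_cast [hn]; ring,
    Real.rpow_mul hx, ← Real.sqrt_eq_rpow, Real.rpow_neg (Real.sqrt_nonneg x), Real.rpow_natCast]

theorem IsCompact.exists_pos_forall_dist_le_imp_lt {X : Type*} [PseudoMetricSpace X]
    {K : Set X} (hK : IsCompact K) {f : X → ℝ} (hf : Continuous f) {c : ℝ}
    (hfc : ∀ y ∈ K, c < f y) : ∃ δ > 0, ∀ x, ∀ y ∈ K, dist x y ≤ δ → c < f x := by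
  obtain ⟨δ, hδ, hsub⟩ := hK.exists_cthickening_subset_open (isOpen_Ioi.preimage hf) hfc
  exact ⟨δ, hδ, fun x y hy hxy => hsub (Metric.mem_cthickening_of_dist_le x y δ K hy hxy)⟩

theorem EuclideanSpace.isCompact_setOf_le_le {ι : Type*} [Fintype ι] (a₁ a₂ : EuclideanSpace ℝ ι) :
    IsCompact {b : EuclideanSpace ℝ ι | ∀ i, a₁ i ≤ b i ∧ b i ≤ a₂ i} := by
  have := (EuclideanSpace.equiv ι ℝ).toHomeomorph.isCompact_preimage.mpr
    (isCompact_Icc (a := fun i => a₁ i) (b := fun i => a₂ i))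
  convert this using 1
  ext b
  simp [Pi.le_def, forall_and]

theorem integrable_comp_add_coe {F E : Type*} [NormedAddCommGroup F] [NormedSpace ℝ F]
    [FiniteDimensional ℝ F] [NormedAddCommGroup E] {f : F → E} (hf : Continuous f)
    (hfs : HasCompactSupport f)
    (V : Submodule ℝ F) [MeasurableSpace V] [OpensMeasurableSpace V] (μ : Measure V)
    [IsFiniteMeasureOnCompacts μ] (x : F) : Integrable (fun w : V => f (x + w)) μ := by
  have hiso : Isometry fun w : V => x + (w : F) :=
    Isometry.of_dist_eq fun w₁ w₂ => by rw [dist_add_left]; rfl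
  exact (hf.comp hiso.continuous).integrable_of_hasCompactSupport
    (hfs.comp_isClosedEmbedding hiso.isClosedEmbedding)

theorem mul_two_mul_pow_le_radon {d : ℕ} {f : EuclideanSpace ℝ (Fin d) → ℝ} (hf : Continuous f)
    (hfs : HasCompactSupport f) (hf0 : ∀ x, 0 ≤ f x) {θ : EuclideanSpace ℝ (Fin d)}
    (hθ : ‖θ‖ = 1) {t : EuclideanSpace ℝ (Fin d)} {s r c : ℝ}
    (hs : |s - ⟪t, θ⟫| ≤ r) (hfc : ∀ x, dist x t ≤ √d * r → c ≤ f x) :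
    c * (2 * r) ^ (d - 1) ≤ radon d f s θ := by
  have hr : 0 ≤ r := (abs_nonneg _).trans hs
  have hdim : Module.finrank ℝ (ℝ ∙ θ)ᗮ + 1 = d := by
    simpa using Submodule.finrank_orthogonal_span_singleton_add_one (v := θ)
      (by simp [← norm_ne_zero_iff, hθ])
  let b := stdOrthonormalBasis ℝ (ℝ ∙ θ)ᗮ
  let p : (ℝ ∙ θ)ᗮ := ⟨t - ⟪t, θ⟫ • θ, by
    rw [Submodule.mem_orthogonal_singleton_iff_inner_right, inner_sub_right, real_inner_smul_right,
      real_inner_self_eq_norm_sq, hθ, real_inner_comm]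
    ring⟩
  let C := {w : (ℝ ∙ θ)ᗮ | ∀ j, b.repr w j ∈ Icc (b.repr p j - r) (b.repr p j + r)}
  have hCvol : volume C = ENNReal.ofReal (2 * r) ^ (d - 1) := by
    simp only [C, b.volume_setOf_repr_mem_Icc, add_sub_sub_cancel, ← two_mul, Finset.prod_const,
      Finset.card_univ, Fintype.card_fin, ← hdim, Nat.add_sub_cancel]
  have hCmeas : MeasurableSet C := by
    simp only [C, ofPred_forall]
    exact MeasurableSet.iInter fun j => measurableSet_Icc.preimage (by fun_prop)
  have hfC : ∀ w ∈ C, c ≤ f (s • θ + w) := by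
    intro w hw
    have hwp := b.norm_sq_le_card_mul_sq (v := w - p) (r := r) fun j => by
      rw [map_sub, PiLp.sub_apply, abs_le]
      constructor <;> linarith [(hw j).1, (hw j).2]
    rw [Fintype.card_fin] at hwp
    refine hfc _ ?_
    convert dist_smul_add_le_sqrt_mul hθ
      (Submodule.mem_orthogonal_singleton_iff_inner_right.mp w.2) hs hwp using 3
    exact_mod_cast hdim.symm
  have hint := integrable_comp_add_coe hf hfs (ℝ ∙ θ)ᗮ volume (s • θ)
  calc c * (2 * r) ^ (d - 1) = c * volume.real C := by
        rw [Measure.real, hCvol, ENNReal.toReal_pow, ENNReal.toReal_ofReal (by positivity)]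
    _ ≤ ∫ w in C, f (s • θ + w) :=
        setIntegral_ge_of_const_le_real hCmeas
          (hCvol ▸ ENNReal.pow_ne_top ENNReal.ofReal_ne_top) hfC hint.integrableOn
    _ ≤ radon d f s θ := setIntegral_le_integral hint (.of_forall fun _ => hf0 _)

theorem radon_lower_bound_on_rectangle_general
    (d : ℕ) (hd : 2 ≤ d) (f : EuclideanSpace ℝ (Fin d) → ℝ)
    (hf_cont : Continuous f) (hf_supp : HasCompactSupport f) (hf_nonneg : ∀ b, 0 ≤ f b)
    (a₁ a₂ : EuclideanSpace ℝ (Fin d))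
    (c : ℝ) (hc : 0 < c)
    (hfc : ∀ b : EuclideanSpace ℝ (Fin d), (∀ i, a₁ i ≤ b i ∧ b i ≤ a₂ i) → c ≤ f b) :
    ∃ δ : ℝ, 0 < δ ∧
      ∀ h : ℝ, 0 < h → h ≤ 1 →
      ∀ t : EuclideanSpace ℝ (Fin d), (∀ i, a₁ i + h ≤ t i ∧ t i ≤ a₂ i - h) →
      ∀ θ : EuclideanSpace ℝ (Fin d), ‖θ‖ = 1 →
      ∀ s : ℝ, h * |s| < δ / Real.sqrt d →
      c / 2 * (2 * δ) ^ (d - 1) * (d : ℝ) ^ ((1 - (d : ℝ)) / 2)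
        ≤ radon d f (⟪t, θ⟫ + h * s) θ := by
  obtain ⟨δ, hδ, hf_near⟩ :=
    (EuclideanSpace.isCompact_setOf_le_le a₁ a₂).exists_pos_forall_dist_le_imp_lt hf_cont
      (c := c / 2) fun b hb => by linarith [hfc b hb]
  refine ⟨δ, hδ, fun h hh _ t ht θ hθ s hs => ?_⟩
  have hsqrt : 0 < √(d : ℝ) := Real.sqrt_pos.2 (by positivity)
  have ht_mem : ∀ i, a₁ i ≤ t i ∧ t i ≤ a₂ i := fun i =>
    ⟨by linarith [(ht i).1], by linarith [(ht i).2]⟩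
  calc c / 2 * (2 * δ) ^ (d - 1) * (d : ℝ) ^ ((1 - (d : ℝ)) / 2)
      = c / 2 * (2 * (δ / √d)) ^ (d - 1) := by
        rw [Real.rpow_one_sub_natCast_div_two (Nat.cast_nonneg d) (by omega), mul_div_assoc',
          div_pow]
        ring
    _ ≤ radon d f (⟪t, θ⟫ + h * s) θ := by
        refine mul_two_mul_pow_le_radon hf_cont hf_supp hf_nonneg hθ (t := t) ?_
          fun x hx => (hf_near x t ht_mem ?_).le
        · rw [add_sub_cancel_left, abs_mul, abs_of_pos hh]
          exact hs.le
        · rwa [mul_div_cancel₀ _ hsqrt.ne'] at hx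

/-- If a continuous compactly supported nonnegative `f` is bounded below by `c > 0` on the
hyperrectangle `[a₁, a₂]`, then there is `δ > 0` such that the Radon transform
`Rf(⟨t, θ⟩ + hs, θ)` is bounded below by `(c/2)(2δ)^{d−1} d^{(1−d)/2}` for all scales
`h ∈ (0,1]`, all `t` with `a₁ + h ≤ t ≤ a₂ − h` componentwise, all unit `θ` and all `s`
with `h|s| < δ/√d`. -/
theorem radon_lower_bound_on_rectangle
    (d : ℕ) (hd : 2 ≤ d) (f : EuclideanSpace ℝ (Fin d) → ℝ)
    (hf_cont : Continuous f) (hf_supp : HasCompactSupport f) (hf_nonneg : ∀ b, 0 ≤ f b)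
    (a₁ a₂ : EuclideanSpace ℝ (Fin d)) (hle : ∀ i, a₁ i ≤ a₂ i)
    (c : ℝ) (hc : 0 < c)
    (hfc : ∀ b : EuclideanSpace ℝ (Fin d), (∀ i, a₁ i ≤ b i ∧ b i ≤ a₂ i) → c ≤ f b) :
    ∃ δ : ℝ, 0 < δ ∧
      ∀ h : ℝ, 0 < h → h ≤ 1 →
      ∀ t : EuclideanSpace ℝ (Fin d), (∀ i, a₁ i + h ≤ t i ∧ t i ≤ a₂ i - h) →
      ∀ θ : EuclideanSpace ℝ (Fin d), ‖θ‖ = 1 →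
      ∀ s : ℝ, h * |s| < δ / Real.sqrt d →
      c / 2 * (2 * δ) ^ (d - 1) * (d : ℝ) ^ ((1 - (d : ℝ)) / 2)
        ≤ radon d f (⟪t, θ⟫ + h * s) θ :=
  radon_lower_bound_on_rectangle_general d hd f hf_cont hf_supp hf_nonneg a₁ a₂ c hc hfc
end

section
/- Let d ≥ 2, let X be a random vector in ℝ^{d−1} whose law has density f_X with respect to Lebesgue measure, and let ζ be a random variable independent of X with P(ζ = 1) = P(ζ = −1) = 1/2. Define the S^{d−1}-valued random vector Θ = ζ (1, X)/‖(1, X)‖, where (1, X) = (1, X₁, …, X_{d−1}) ∈ ℝ^d. Then the law of Θ is absolutely continuous with respect to the surface measure σ on S^{d−1} with density p(θ) = (2|θ₁|^d)^{−1} f_X(θ₂/θ₁, …, θ_d/θ₁) for θ₁ ≠ 0 (and p(θ) = 0 for θ₁ = 0); that is, for every bounded measurable g : S^{d−1} → ℝ, E[g(Θ)] = ∫_{S^{d−1}} g(θ) p(θ) dσ(θ). -/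
/-!
Extend the claimed density `p` to all of `ℝ^d` by the same formula; it is homogeneous of degree
`-d`. Put `w y = ‖y‖ p y` on the closed unit ball and `w = 0` outside. By the polar-coordinate
formula, `∫ G (y / ‖y‖) w y dy = ∫ G p dσ` for bounded `G`, because `r^(d-1) w (r θ) = p θ` for
`0 < r ≤ 1`. So it suffices that the angular part of `w y dy` is the law of `Θ`. Writing
`y = t (1, x)`, the Jacobian `|t|^(d-1)` of `x ↦ t x` cancels the homogeneity of `p`; integrating
out `t` over each half-line `t > 0`, `t < 0` leaves `f_X x / 2 dx`, i.e. half the law of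
`±(1, X)/‖(1, X)‖`. The independent sign `ζ` mixes these two laws with weights `1/2`.
-/

open MeasureTheory ProbabilityTheory Set Module
open scoped ENNReal

lemma inv_norm_smul_smul_of_pos {E : Type*} [NormedAddCommGroup E] [NormedSpace ℝ E]
    {t : ℝ} (ht : 0 < t) (v : E) : ‖t • v‖⁻¹ • t • v = ‖v‖⁻¹ • v := by
  rw [norm_smul, Real.norm_of_nonneg ht.le, smul_smul, mul_inv, mul_right_comm,
    inv_mul_cancel₀ ht.ne', one_mul]

lemma lintegral_eq_ofReal_mul_lintegral_comp_smul {E : Type*} [NormedAddCommGroup E]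
    [NormedSpace ℝ E] [MeasurableSpace E] [BorelSpace E] [FiniteDimensional ℝ E]
    (μ : Measure E) [μ.IsAddHaarMeasure] (f : E → ℝ≥0∞) {r : ℝ} (hr : r ≠ 0) :
    ∫⁻ x, f x ∂μ = ENNReal.ofReal (|r| ^ finrank ℝ E) * ∫⁻ x, f (r • x) ∂μ := by
  have hmap := (Homeomorph.smulOfNeZero r hr).measurableEmbedding.lintegral_map (μ := μ) f
  simp only [Homeomorph.smulOfNeZero_apply] at hmap
  rw [← hmap, Measure.map_addHaar_smul μ hr, lintegral_smul_measure, smul_eq_mul, ← mul_assoc,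
    ← ENNReal.ofReal_mul (by positivity), abs_inv, abs_pow, mul_inv_cancel₀ (by positivity),
    ENNReal.ofReal_one, one_mul]

lemma lintegral_eq_setLIntegral_Ioi_add_setLIntegral_Ioi_comp_neg (f : ℝ → ℝ≥0∞) :
    ∫⁻ t, f t = (∫⁻ t in Ioi 0, f t) + ∫⁻ t in Ioi 0, f (-t) := by
  have hneg : ∫⁻ t in Ioi 0, f (-t) = ∫⁻ t in Iio 0, f t := by
    rw [← (Measure.measurePreserving_neg volume).setLIntegral_comp_preimage_emb
      (Homeomorph.neg ℝ).measurableEmbedding, neg_preimage, neg_Ioi, neg_zero]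
    simp
  rw [hneg, ← lintegral_add_compl (μ := volume) f (measurableSet_Ioi (a := (0 : ℝ))), compl_Ioi,
    setLIntegral_congr Iio_ae_eq_Iic]

theorem eq_half_smul_dirac_add_dirac {μ : Measure ℝ} [IsProbabilityMeasure μ]
    (h1 : μ {1} = 2⁻¹) (hm1 : μ {-1} = 2⁻¹) :
    μ = (2⁻¹ : ℝ≥0∞) • (Measure.dirac 1 + Measure.dirac (-1)) := by
  have hdisj : Disjoint ({1} : Set ℝ) {-1} := by norm_num
  have hfull : ∀ᵐ s ∂μ, s ∈ ({1} ∪ {-1} : Set ℝ) := by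
    rw [ae_iff, ← compl_def, prob_compl_eq_zero_iff (by measurability),
      measure_union hdisj (measurableSet_singleton _), h1, hm1, ENNReal.inv_two_add_inv_two]
  rw [← Measure.restrict_eq_self_of_ae_mem hfull,
    Measure.restrict_union hdisj (measurableSet_singleton _), Measure.restrict_singleton,
    Measure.restrict_singleton, h1, hm1, smul_add]

theorem map_smul_eq_of_indepFun_of_rademacher {Ω E : Type*} [MeasurableSpace Ω] {P : Measure Ω}
    [IsProbabilityMeasure P] [AddCommGroup E] [Module ℝ E] [MeasurableSpace E]
    [MeasurableSMul₂ ℝ E] {ζ : Ω → ℝ} {V : Ω → E} (hζ : Measurable ζ) (hV : Measurable V)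
    (h1 : P {ω | ζ ω = 1} = 2⁻¹) (hm1 : P {ω | ζ ω = -1} = 2⁻¹) (hind : IndepFun ζ V P) :
    P.map (fun ω => ζ ω • V ω) =
      (2⁻¹ : ℝ≥0∞) • (P.map V + (P.map V).map (fun v => -v)) := by
  have hlaw : P.map ζ = (2⁻¹ : ℝ≥0∞) • (Measure.dirac 1 + Measure.dirac (-1)) := by
    have := Measure.isProbabilityMeasure_map (μ := P) hζ.aemeasurable
    refine eq_half_smul_dirac_add_dirac ?_ ?_
    · rwa [Measure.map_apply hζ (measurableSet_singleton _)]
    · rwa [Measure.map_apply hζ (measurableSet_singleton _)]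
  have hsmul : Measurable fun p : ℝ × E => p.1 • p.2 := measurable_fst.smul measurable_snd
  have hpair : Measurable fun ω => (ζ ω, V ω) := hζ.prodMk hV
  rw [show (fun ω => ζ ω • V ω) = (fun p : ℝ × E => p.1 • p.2) ∘ fun ω => (ζ ω, V ω) from rfl,
    ← Measure.map_map hsmul hpair,
    (indepFun_iff_map_prod_eq_prod_map_map hζ.aemeasurable hV.aemeasurable).1 hind, hlaw,
    Measure.prod_smul_left, Measure.add_prod, Measure.dirac_prod, Measure.dirac_prod,
    Measure.map_smul, Measure.map_add _ _ hsmul, Measure.map_map hsmul measurable_prodMk_left,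
    Measure.map_map hsmul measurable_prodMk_left]
  have hpos : (fun p : ℝ × E => p.1 • p.2) ∘ Prod.mk 1 = id := by funext v; simp
  have hneg : (fun p : ℝ × E => p.1 • p.2) ∘ Prod.mk (-1) = fun v => -v := by funext v; simp
  rw [hpos, hneg, Measure.map_id]

section

variable {m : ℕ}

noncomputable def euclideanCons (t : ℝ) (x : EuclideanSpace ℝ (Fin m)) :
    EuclideanSpace ℝ (Fin (m + 1)) :=
  WithLp.toLp 2 (Fin.cons t x)

@[simp] lemma euclideanCons_zero (t : ℝ) (x : EuclideanSpace ℝ (Fin m)) :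
    euclideanCons t x 0 = t := rfl

@[simp] lemma euclideanCons_succ (t : ℝ) (x : EuclideanSpace ℝ (Fin m)) (j : Fin m) :
    euclideanCons t x j.succ = x j := rfl

lemma euclideanCons_smul (t s : ℝ) (x : EuclideanSpace ℝ (Fin m)) :
    euclideanCons (t * s) (t • x) = t • euclideanCons s x := by
  ext j
  refine Fin.cases ?_ (fun j => ?_) j <;> simp

lemma euclideanCons_ne_zero_of_ne_zero {t : ℝ} (ht : t ≠ 0) (x : EuclideanSpace ℝ (Fin m)) :
    euclideanCons t x ≠ 0 :=
  fun h => ht (by simpa using congrArg (· 0) h)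

lemma measurePreserving_euclideanCons :
    MeasurePreserving (fun p : ℝ × EuclideanSpace ℝ (Fin m) => euclideanCons p.1 p.2) := by
  have := ((PiLp.volume_preserving_toLp (Fin (m + 1))).comp
    ((volume_preserving_piFinSuccAbove (fun _ : Fin (m + 1) => ℝ) 0).symm)).comp
    ((MeasurePreserving.id volume).prod (PiLp.volume_preserving_ofLp (Fin m)))
  rw [Measure.volume_eq_prod]
  convert this using 1
  ext p j
  refine Fin.cases ?_ (fun j => ?_) j <;>
    simp [euclideanCons, MeasurableEquiv.piFinSuccAbove_symm_apply]

lemma measurable_euclideanCons :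
    Measurable (fun p : ℝ × EuclideanSpace ℝ (Fin m) => euclideanCons p.1 p.2) :=
  measurePreserving_euclideanCons.measurable

-- inverse of the gnomonic projection `θ ↦ (θ₂/θ₁, …, θ_d/θ₁)` on the hemisphere `θ₁ > 0`
noncomputable def gnomonicLift (x : EuclideanSpace ℝ (Fin m)) : EuclideanSpace ℝ (Fin (m + 1)) :=
  ‖euclideanCons 1 x‖⁻¹ • euclideanCons 1 x

lemma measurable_gnomonicLift : Measurable (gnomonicLift (m := m)) := by
  have : Measurable fun x : EuclideanSpace ℝ (Fin m) => euclideanCons 1 x :=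
    measurable_euclideanCons.comp (measurable_const.prodMk measurable_id)
  exact this.norm.inv.smul this

noncomputable def sphereDensity (fX : EuclideanSpace ℝ (Fin m) → ℝ)
    (y : EuclideanSpace ℝ (Fin (m + 1))) : ℝ :=
  if y 0 = 0 then 0
  else (2 * |y 0| ^ (m + 1))⁻¹ * fX (WithLp.toLp 2 (fun j : Fin m => y j.succ / y 0))

noncomputable def ballDensity (fX : EuclideanSpace ℝ (Fin m) → ℝ)
    (y : EuclideanSpace ℝ (Fin (m + 1))) : ℝ :=
  (Metric.closedBall 0 1).indicator (fun y => ‖y‖ * sphereDensity fX y) y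

variable {fX : EuclideanSpace ℝ (Fin m) → ℝ}

lemma measurable_sphereDensity (hfX : Measurable fX) : Measurable (sphereDensity fX) := by
  have hcoord : ∀ i, Measurable fun y : EuclideanSpace ℝ (Fin (m + 1)) => y i := fun i =>
    (measurable_pi_apply i).comp (PiLp.volume_preserving_ofLp (Fin (m + 1))).measurable
  refine Measurable.ite (measurableSet_eq_fun (hcoord 0) measurable_const) measurable_const ?_
  refine (measurable_const.mul (((hcoord 0).abs.pow_const _))).inv.mul (hfX.comp ?_)
  exact (PiLp.volume_preserving_toLp (Fin m)).measurable.comp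
    (measurable_pi_lambda _ fun j => (hcoord j.succ).div (hcoord 0))

lemma sphereDensity_smul {t : ℝ} (ht : t ≠ 0) (y : EuclideanSpace ℝ (Fin (m + 1))) :
    sphereDensity fX (t • y) = (|t| ^ (m + 1))⁻¹ * sphereDensity fX y := by
  by_cases hy : y 0 = 0
  · simp [sphereDensity, hy]
  · have hratio : (fun j : Fin m => t * y j.succ / (t * y 0)) = fun j => y j.succ / y 0 := by
      funext j
      exact mul_div_mul_left _ _ ht
    simp only [sphereDensity, PiLp.smul_apply, smul_eq_mul, mul_eq_zero, ht, hy, or_self,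
      if_false, hratio, abs_mul, mul_pow]
    ring

lemma sphereDensity_neg (y : EuclideanSpace ℝ (Fin (m + 1))) :
    sphereDensity fX (-y) = sphereDensity fX y := by
  rw [← neg_one_smul ℝ y, sphereDensity_smul (by norm_num)]
  simp

lemma sphereDensity_euclideanCons_one (x : EuclideanSpace ℝ (Fin m)) :
    sphereDensity fX (euclideanCons 1 x) = 2⁻¹ * fX x := by
  simp [sphereDensity]

lemma measurable_ballDensity (hfX : Measurable fX) : Measurable (ballDensity fX) :=
  (measurable_norm.mul (measurable_sphereDensity hfX)).indicator measurableSet_closedBall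

lemma ballDensity_nonneg (hfX : ∀ x, 0 ≤ fX x) (y : EuclideanSpace ℝ (Fin (m + 1))) :
    0 ≤ ballDensity fX y := by
  refine indicator_nonneg (fun y _ => mul_nonneg (norm_nonneg y) ?_) y
  unfold sphereDensity
  split_ifs
  exacts [le_rfl, mul_nonneg (by positivity) (hfX _)]

lemma pow_mul_ballDensity_smul {t : ℝ} (ht : 0 < t) {v : EuclideanSpace ℝ (Fin (m + 1))}
    (hv : v ≠ 0) :
    t ^ m * ballDensity fX (t • v) =
      (Ioc 0 ‖v‖⁻¹).indicator (fun _ => ‖v‖ * sphereDensity fX v) t := by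
  have hv' : 0 < ‖v‖ := norm_pos_iff.2 hv
  have hnorm : ‖t • v‖ = t * ‖v‖ := by rw [norm_smul, Real.norm_of_nonneg ht.le]
  have hmem : t • v ∈ Metric.closedBall 0 1 ↔ t ∈ Ioc 0 ‖v‖⁻¹ := by
    rw [mem_closedBall_zero_iff, hnorm, mem_Ioc, ← one_div, le_div_iff₀ hv']
    exact ⟨fun h => ⟨ht, h⟩, And.right⟩
  by_cases h : t ∈ Ioc 0 ‖v‖⁻¹
  · rw [ballDensity, indicator_of_mem (hmem.2 h), indicator_of_mem h, hnorm,
      sphereDensity_smul ht.ne', abs_of_pos ht]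
    field_simp
    ring
  · rw [ballDensity, indicator_of_notMem (mt hmem.1 h), indicator_of_notMem h, mul_zero]

lemma integral_Ioi_pow_mul_ballDensity_smul (g : EuclideanSpace ℝ (Fin (m + 1)) → ℝ)
    {θ : EuclideanSpace ℝ (Fin (m + 1))} (hθ : ‖θ‖ = 1) :
    ∫ r in Ioi (0 : ℝ), r ^ m * (ballDensity fX (r • θ) * g (‖r • θ‖⁻¹ • r • θ)) =
      g θ * sphereDensity fX θ := by
  have hθ0 : θ ≠ 0 := norm_ne_zero_iff.1 (by rw [hθ]; exact one_ne_zero)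
  have hpt : EqOn (fun r : ℝ => r ^ m * (ballDensity fX (r • θ) * g (‖r • θ‖⁻¹ • r • θ)))
      ((Ioc 0 1).indicator fun _ => g θ * sphereDensity fX θ) (Ioi 0) := by
    intro r hr
    simp only
    rw [← mul_assoc, pow_mul_ballDensity_smul hr hθ0, inv_norm_smul_smul_of_pos hr, hθ, inv_one,
      one_smul, one_mul, ← indicator_mul_const, mul_comm]
  rw [setIntegral_congr_fun measurableSet_Ioi hpt, setIntegral_indicator measurableSet_Ioc,
    inter_eq_right.2 Ioc_subset_Ioi_self, setIntegral_const, Real.volume_real_Ioc]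
  simp

lemma lintegral_Ioi_pow_mul_ballDensity_smul (φ : EuclideanSpace ℝ (Fin (m + 1)) → ℝ≥0∞)
    {v : EuclideanSpace ℝ (Fin (m + 1))} (hv : v ≠ 0) :
    ∫⁻ t in Ioi (0 : ℝ), ENNReal.ofReal (t ^ m) *
        (ENNReal.ofReal (ballDensity fX (t • v)) * φ (‖t • v‖⁻¹ • t • v)) =
      ENNReal.ofReal (sphereDensity fX v) * φ (‖v‖⁻¹ • v) := by
  have hpt : EqOn (fun t : ℝ => ENNReal.ofReal (t ^ m) *
        (ENNReal.ofReal (ballDensity fX (t • v)) * φ (‖t • v‖⁻¹ • t • v)))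
      ((Ioc 0 ‖v‖⁻¹).indicator fun _ =>
        ENNReal.ofReal (‖v‖ * sphereDensity fX v) * φ (‖v‖⁻¹ • v)) (Ioi 0) := by
    intro t ht
    simp only
    rw [← mul_assoc, ← ENNReal.ofReal_mul (pow_nonneg (le_of_lt ht) m),
      pow_mul_ballDensity_smul ht hv, inv_norm_smul_smul_of_pos ht]
    by_cases h : t ∈ Ioc 0 ‖v‖⁻¹ <;> simp [h]
  rw [setLIntegral_congr_fun measurableSet_Ioi hpt, lintegral_indicator measurableSet_Ioc,
    setLIntegral_const, Measure.restrict_apply measurableSet_Ioc,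
    inter_eq_left.2 Ioc_subset_Ioi_self, Real.volume_Ioc, sub_zero, mul_right_comm,
    mul_comm (ENNReal.ofReal (‖v‖ * _)), ← ENNReal.ofReal_mul (inv_nonneg.2 (norm_nonneg v)),
    inv_mul_cancel_left₀ (norm_ne_zero_iff.2 hv)]

lemma lintegral_abs_pow_mul_ballDensity_smul (φ : EuclideanSpace ℝ (Fin (m + 1)) → ℝ≥0∞)
    {v : EuclideanSpace ℝ (Fin (m + 1))} (hv : v ≠ 0) :
    ∫⁻ t, ENNReal.ofReal (|t| ^ m) *
        (ENNReal.ofReal (ballDensity fX (t • v)) * φ (‖t • v‖⁻¹ • t • v)) =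
      ENNReal.ofReal (sphereDensity fX v) * (φ (‖v‖⁻¹ • v) + φ (-(‖v‖⁻¹ • v))) := by
  rw [lintegral_eq_setLIntegral_Ioi_add_setLIntegral_Ioi_comp_neg, mul_add]
  congr 1
  · rw [← lintegral_Ioi_pow_mul_ballDensity_smul φ hv]
    refine setLIntegral_congr_fun measurableSet_Ioi fun t ht => ?_
    rw [abs_of_pos ht]
  · rw [← sphereDensity_neg, ← smul_neg, ← norm_neg,
      ← lintegral_Ioi_pow_mul_ballDensity_smul φ (neg_ne_zero.2 hv)]
    refine setLIntegral_congr_fun measurableSet_Ioi fun t ht => ?_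
    rw [abs_neg, abs_of_pos ht, neg_smul, ← smul_neg]

lemma lintegral_ofReal_ballDensity_mul (hfX : Measurable fX)
    {φ : EuclideanSpace ℝ (Fin (m + 1)) → ℝ≥0∞} (hφ : Measurable φ) :
    ∫⁻ y, ENNReal.ofReal (ballDensity fX y) * φ (‖y‖⁻¹ • y) =
      2⁻¹ * ((∫⁻ x, ENNReal.ofReal (fX x) * φ (gnomonicLift x)) +
        ∫⁻ x, ENNReal.ofReal (fX x) * φ (-gnomonicLift x)) := by
  set F : EuclideanSpace ℝ (Fin (m + 1)) → ℝ≥0∞ :=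
    fun y => ENNReal.ofReal (ballDensity fX y) * φ (‖y‖⁻¹ • y)
  have hF : Measurable F :=
    (measurable_ballDensity hfX).ennreal_ofReal.mul
      (hφ.comp (measurable_norm.inv.smul measurable_id))
  calc ∫⁻ y, F y = ∫⁻ t, ∫⁻ x, F (euclideanCons t x) := by
        rw [← measurePreserving_euclideanCons.lintegral_comp hF, Measure.volume_eq_prod]
        exact lintegral_prod _ (hF.comp measurable_euclideanCons).aemeasurable
    _ = ∫⁻ t, ∫⁻ x, ENNReal.ofReal (|t| ^ m) * F (t • euclideanCons 1 x) := by
        have hae : ∀ᵐ t : ℝ, t ≠ 0 := by simp [ae_iff]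
        refine lintegral_congr_ae (hae.mono fun t ht => ?_)
        dsimp only
        rw [lintegral_eq_ofReal_mul_lintegral_comp_smul volume _ ht, finrank_euclideanSpace_fin,
          ← lintegral_const_mul' _ _ ENNReal.ofReal_ne_top]
        simp_rw [← euclideanCons_smul, mul_one]
    _ = ∫⁻ x, ∫⁻ t, ENNReal.ofReal (|t| ^ m) * F (t • euclideanCons 1 x) := by
        refine lintegral_lintegral_swap (Measurable.aemeasurable ?_)
        exact (measurable_fst.abs.pow_const m).ennreal_ofReal.mul (hF.comp (measurable_fst.smul
          (measurable_euclideanCons.comp (measurable_const.prodMk measurable_snd))))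
    _ = ∫⁻ x, 2⁻¹ * (ENNReal.ofReal (fX x) * φ (gnomonicLift x)) +
          2⁻¹ * (ENNReal.ofReal (fX x) * φ (-gnomonicLift x)) := by
        refine lintegral_congr fun x => ?_
        rw [lintegral_abs_pow_mul_ballDensity_smul φ
            (euclideanCons_ne_zero_of_ne_zero one_ne_zero x),
          sphereDensity_euclideanCons_one, ENNReal.ofReal_mul (by norm_num),
          ENNReal.ofReal_inv_of_pos two_pos, ENNReal.ofReal_ofNat, gnomonicLift]
        ring
    _ = _ := by
        have hmeas : Measurable fun x => ENNReal.ofReal (fX x) * φ (gnomonicLift x) :=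
          hfX.ennreal_ofReal.mul (hφ.comp measurable_gnomonicLift)
        rw [lintegral_add_left (hmeas.const_mul _), lintegral_const_mul _ hmeas,
          lintegral_const_mul' _ _ (by norm_num), ← mul_add]

lemma lintegral_ofReal_ballDensity (hfX : Measurable fX) :
    ∫⁻ y, ENNReal.ofReal (ballDensity fX y) = ∫⁻ x, ENNReal.ofReal (fX x) := by
  have h := lintegral_ofReal_ballDensity_mul hfX (φ := 1) measurable_const
  simp only [Pi.one_apply, mul_one] at h
  rw [h, ← two_mul, ← mul_assoc, ENNReal.inv_mul_cancel two_ne_zero ENNReal.ofNat_ne_top, one_mul]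

lemma integrable_ballDensity (hfX : Measurable fX) (hfX_nonneg : ∀ x, 0 ≤ fX x)
    (hfX_int : Integrable fX) : Integrable (ballDensity fX) := by
  refine ⟨(measurable_ballDensity hfX).aestronglyMeasurable, ?_⟩
  rw [hasFiniteIntegral_iff_ofReal (ae_of_all _ (ballDensity_nonneg hfX_nonneg)),
    lintegral_ofReal_ballDensity hfX]
  exact hfX_int.lintegral_lt_top

theorem map_normalize_withDensity_ballDensity (hfX : Measurable fX) :
    (volume.withDensity fun y => ENNReal.ofReal (ballDensity fX y)).map (fun y => ‖y‖⁻¹ • y) =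
      (2⁻¹ : ℝ≥0∞) •
        ((volume.withDensity fun x => ENNReal.ofReal (fX x)).map gnomonicLift +
          ((volume.withDensity fun x => ENNReal.ofReal (fX x)).map gnomonicLift).map
            fun v => -v) := by
  refine Measure.ext_of_lintegral _ fun φ hφ => ?_
  have hnormalize : Measurable fun y : EuclideanSpace ℝ (Fin (m + 1)) => ‖y‖⁻¹ • y :=
    measurable_norm.inv.smul measurable_id
  have hφn : Measurable fun y : EuclideanSpace ℝ (Fin (m + 1)) => φ (‖y‖⁻¹ • y) :=
    hφ.comp hnormalize
  have hφp : Measurable fun x => φ (gnomonicLift (m := m) x) := hφ.comp measurable_gnomonicLift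
  have hφm : Measurable fun x => φ (-gnomonicLift (m := m) x) :=
    hφ.comp (measurable_neg.comp measurable_gnomonicLift)
  rw [lintegral_map hφ hnormalize,
    lintegral_withDensity_eq_lintegral_mul _ (measurable_ballDensity hfX).ennreal_ofReal hφn,
    lintegral_smul_measure, lintegral_add_measure, lintegral_map hφ measurable_gnomonicLift,
    Measure.map_map measurable_neg measurable_gnomonicLift,
    lintegral_map hφ (measurable_neg.comp measurable_gnomonicLift)]
  simp only [Function.comp_apply]
  rw [lintegral_withDensity_eq_lintegral_mul _ hfX.ennreal_ofReal hφp,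
    lintegral_withDensity_eq_lintegral_mul _ hfX.ennreal_ofReal hφm]
  exact lintegral_ofReal_ballDensity_mul hfX hφ

end

theorem density_of_normalized_design_general
    (m : ℕ)
    (Ω : Type*) [MeasurableSpace Ω] (P : Measure Ω) [IsProbabilityMeasure P]
    (X : Ω → EuclideanSpace ℝ (Fin m)) (hX : Measurable X)
    (fX : EuclideanSpace ℝ (Fin m) → ℝ) (hfX_meas : Measurable fX)
    (hfX_nonneg : ∀ x, 0 ≤ fX x)
    (hXdens : Measure.map X P = volume.withDensity (fun x => ENNReal.ofReal (fX x)))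
    (ζ : Ω → ℝ) (hζ : Measurable ζ)
    (hζ1 : P {ω | ζ ω = 1} = 1/2) (hζm1 : P {ω | ζ ω = -1} = 1/2)
    (hindep : ProbabilityTheory.IndepFun ζ X P)
    (Θ : Ω → EuclideanSpace ℝ (Fin (m + 1)))
    (hΘ : ∀ ω, Θ ω =
      (ζ ω / ‖(WithLp.equiv 2 (∀ _ : Fin (m + 1), ℝ)).symm
          (Fin.cons 1 (fun j => X ω j))‖) •
        (WithLp.equiv 2 (∀ _ : Fin (m + 1), ℝ)).symm (Fin.cons 1 (fun j => X ω j)))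
    (σm : Measure (Metric.sphere (0 : EuclideanSpace ℝ (Fin (m + 1))) 1))
    (hσ : ∀ g : EuclideanSpace ℝ (Fin (m + 1)) → ℝ, Integrable g →
      ∫ x, g x = ∫ θ : Metric.sphere (0 : EuclideanSpace ℝ (Fin (m + 1))) 1,
        (∫ r in Set.Ioi (0:ℝ), r ^ m * g (r • (θ : EuclideanSpace ℝ (Fin (m + 1))))) ∂σm)
    (g : EuclideanSpace ℝ (Fin (m + 1)) → ℝ) (hg_meas : Measurable g)
    (hg_bdd : ∃ C : ℝ, ∀ x, |g x| ≤ C) :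
    ∫ ω, g (Θ ω) ∂P
      = ∫ θ : Metric.sphere (0 : EuclideanSpace ℝ (Fin (m + 1))) 1,
          g θ *
            (if (θ : EuclideanSpace ℝ (Fin (m + 1))) 0 = 0 then 0
             else (2 * |(θ : EuclideanSpace ℝ (Fin (m + 1))) 0| ^ (m + 1))⁻¹ *
               fX (WithLp.toLp 2 (fun j : Fin m =>
                 (θ : EuclideanSpace ℝ (Fin (m + 1))) j.succ
                   / (θ : EuclideanSpace ℝ (Fin (m + 1))) 0))) ∂σm := by
  obtain ⟨C, hC⟩ := hg_bdd
  rw [one_div] at hζ1 hζm1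
  have hnormalize : Measurable fun y : EuclideanSpace ℝ (Fin (m + 1)) => ‖y‖⁻¹ • y :=
    measurable_norm.inv.smul measurable_id
  have hΘ_eq : Θ = fun ω => ζ ω • gnomonicLift (X ω) :=
    funext fun ω => by rw [hΘ, div_eq_mul_inv, mul_smul]; rfl
  have hΘ_meas : Measurable Θ := hΘ_eq ▸ hζ.smul (measurable_gnomonicLift.comp hX)
  have hlaw : P.map Θ = (volume.withDensity fun y => ENNReal.ofReal (ballDensity fX y)).map
      fun y => ‖y‖⁻¹ • y := by
    have hV : P.map (fun ω => gnomonicLift (X ω)) = (P.map X).map gnomonicLift :=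
      (Measure.map_map measurable_gnomonicLift hX).symm
    rw [hΘ_eq, map_smul_eq_of_indepFun_of_rademacher (V := fun ω => gnomonicLift (X ω)) hζ
      (measurable_gnomonicLift.comp hX) hζ1 hζm1
      (hindep.comp measurable_id measurable_gnomonicLift), hV, hXdens,
      map_normalize_withDensity_ballDensity hfX_meas]
  have hfX_int : Integrable fX := by
    refine ⟨hfX_meas.aestronglyMeasurable, ?_⟩
    rw [hasFiniteIntegral_iff_ofReal (ae_of_all _ hfX_nonneg), ← setLIntegral_univ,
      ← withDensity_apply _ MeasurableSet.univ, ← hXdens]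
    exact measure_lt_top _ _
  calc ∫ ω, g (Θ ω) ∂P = ∫ y, g y ∂(P.map Θ) :=
        (integral_map hΘ_meas.aemeasurable hg_meas.aestronglyMeasurable).symm
    _ = ∫ y, g (‖y‖⁻¹ • y) ∂(volume.withDensity fun y => ENNReal.ofReal (ballDensity fX y)) := by
        rw [hlaw, integral_map hnormalize.aemeasurable hg_meas.aestronglyMeasurable]
    _ = ∫ y, ballDensity fX y * g (‖y‖⁻¹ • y) := by
        rw [integral_withDensity_eq_integral_toReal_smul
          (measurable_ballDensity hfX_meas).ennreal_ofReal
          (ae_of_all _ fun _ => ENNReal.ofReal_lt_top)]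
        simp_rw [ENNReal.toReal_ofReal (ballDensity_nonneg hfX_nonneg _), smul_eq_mul]
    _ = _ := by
        rw [hσ _ ((integrable_ballDensity hfX_meas hfX_nonneg hfX_int).mul_bdd
          (g := fun y => g (‖y‖⁻¹ • y)) (hg_meas.comp hnormalize).aestronglyMeasurable
          (ae_of_all _ fun y => hC _))]
        exact integral_congr_ae (ae_of_all _ fun θ =>
          integral_Ioi_pow_mul_ballDensity_smul g (mem_sphere_zero_iff_norm.1 θ.2))

/-- Writing `d = m + 1` with `m ≥ 1`: if `X` is a random vector in `ℝ^m = ℝ^{d−1}` with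
Lebesgue density `f_X` and `ζ` is an independent Rademacher sign, then
`Θ = ζ (1, X)/‖(1, X)‖` has density `p(θ) = (2|θ₁|^d)⁻¹ f_X(θ₂/θ₁, …, θ_d/θ₁)` with respect
to the surface measure `σ` on `S^{d−1}`, i.e. `E[g(Θ)] = ∫ g(θ) p(θ) dσ(θ)` for every
bounded measurable `g`. -/
theorem density_of_normalized_design
    (m : ℕ) (hm : 1 ≤ m)
    (Ω : Type*) [MeasurableSpace Ω] (P : Measure Ω) [IsProbabilityMeasure P]
    (X : Ω → EuclideanSpace ℝ (Fin m)) (hX : Measurable X)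
    (fX : EuclideanSpace ℝ (Fin m) → ℝ) (hfX_meas : Measurable fX)
    (hfX_nonneg : ∀ x, 0 ≤ fX x)
    (hXdens : Measure.map X P = volume.withDensity (fun x => ENNReal.ofReal (fX x)))
    (ζ : Ω → ℝ) (hζ : Measurable ζ)
    (hζ1 : P {ω | ζ ω = 1} = 1/2) (hζm1 : P {ω | ζ ω = -1} = 1/2)
    (hindep : ProbabilityTheory.IndepFun ζ X P)
    (Θ : Ω → EuclideanSpace ℝ (Fin (m + 1)))
    (hΘ : ∀ ω, Θ ω =
      (ζ ω / ‖(WithLp.equiv 2 (∀ _ : Fin (m + 1), ℝ)).symm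
          (Fin.cons 1 (fun j => X ω j))‖) •
        (WithLp.equiv 2 (∀ _ : Fin (m + 1), ℝ)).symm (Fin.cons 1 (fun j => X ω j)))
    (σm : Measure (Metric.sphere (0 : EuclideanSpace ℝ (Fin (m + 1))) 1))
    (hσ : ∀ g : EuclideanSpace ℝ (Fin (m + 1)) → ℝ, Integrable g →
      ∫ x, g x = ∫ θ : Metric.sphere (0 : EuclideanSpace ℝ (Fin (m + 1))) 1,
        (∫ r in Set.Ioi (0:ℝ), r ^ m * g (r • (θ : EuclideanSpace ℝ (Fin (m + 1))))) ∂σm)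
    (g : EuclideanSpace ℝ (Fin (m + 1)) → ℝ) (hg_meas : Measurable g)
    (hg_bdd : ∃ C : ℝ, ∀ x, |g x| ≤ C) :
    ∫ ω, g (Θ ω) ∂P
      = ∫ θ : Metric.sphere (0 : EuclideanSpace ℝ (Fin (m + 1))) 1,
          g θ *
            (if (θ : EuclideanSpace ℝ (Fin (m + 1))) 0 = 0 then 0
             else (2 * |(θ : EuclideanSpace ℝ (Fin (m + 1))) 0| ^ (m + 1))⁻¹ *
               fX (WithLp.toLp 2 (fun j : Fin m =>
                 (θ : EuclideanSpace ℝ (Fin (m + 1))) j.succ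
                   / (θ : EuclideanSpace ℝ (Fin (m + 1))) 0))) ∂σm :=
  density_of_normalized_design_general m Ω P X hX fX hfX_meas hfX_nonneg hXdens ζ hζ hζ1 hζm1 hindep
    Θ hΘ σm hσ g hg_meas hg_bdd
end

section
/- Let A > 0 and let ψ : ℝ → ℝ be differentiable with |ψ(u)| ≤ A (1 + u²)^{−1/2} and |ψ'(u)| ≤ A (1 + u²)^{−1} for all u ∈ ℝ. Then there exists a constant C > 0 depending only on A such that for every h > 0 and all a, b ∈ ℝ, ∫_ℝ ( ψ((s − a)/h) − ψ((s − b)/h) )² ds ≤ C |a − b|. -/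
/-!
The squared difference of two translates is at most `2 sup|ψ|` times its absolute value, so it
suffices to bound the `L¹` distance between `ψ` and its translate by `δ`. Writing
`ψ u - ψ (u - δ) = ∫₀^δ ψ'(u - s) ds` and integrating in `u` first (Tonelli) gives
`∫ |ψ u - ψ (u - δ)| du ≤ |δ| ‖ψ'‖₁`, and the decay assumptions give `|ψ| ≤ A` and
`‖ψ'‖₁ ≤ Aπ`.
Rescaling by `h` turns `δ = (b - a)/h` into `|a - b|`, whence `C = 2A²π`.
-/

open MeasureTheory
open scoped Interval

variable {E : Type*} [NormedAddCommGroup E] [NormedSpace ℝ E] [CompleteSpace E]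

theorem enorm_sub_comp_sub_le_lintegral {f : ℝ → E} (hf : Differentiable ℝ f)
    (hf' : Integrable (deriv f)) (u δ : ℝ) :
    ‖f u - f (u - δ)‖ₑ ≤ ∫⁻ s in Ι 0 δ, ‖deriv f (u - s)‖ₑ := by
  have hftc : f u - f (u - δ) = ∫ s in 0..δ, deriv f (u - s) := by
    rw [intervalIntegral.integral_comp_sub_left, sub_zero]
    exact (intervalIntegral.integral_eq_sub_of_hasDerivAt (fun t _ => (hf t).hasDerivAt)
      hf'.intervalIntegrable).symm
  rw [hftc, ← enorm_norm, intervalIntegral.norm_integral_eq_norm_integral_uIoc, enorm_norm]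
  exact enorm_integral_le_lintegral_enorm _

theorem lintegral_enorm_sub_comp_sub_le {f : ℝ → E} (hf : Differentiable ℝ f)
    (hf' : Integrable (deriv f)) (δ : ℝ) :
    ∫⁻ u, ‖f u - f (u - δ)‖ₑ ≤ ‖δ‖ₑ * ∫⁻ u, ‖deriv f u‖ₑ :=
  calc ∫⁻ u, ‖f u - f (u - δ)‖ₑ
      ≤ ∫⁻ u, ∫⁻ s in Ι 0 δ, ‖deriv f (u - s)‖ₑ :=
        lintegral_mono fun u => enorm_sub_comp_sub_le_lintegral hf hf' u δ
    _ = ∫⁻ s in Ι 0 δ, ∫⁻ u, ‖deriv f (u - s)‖ₑ :=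
        lintegral_lintegral_swap
          ((stronglyMeasurable_deriv f).enorm.comp measurable_sub).aemeasurable
    _ = ‖δ‖ₑ * ∫⁻ u, ‖deriv f u‖ₑ := by
        simp only [lintegral_sub_right_eq_self (fun u => ‖deriv f u‖ₑ), setLIntegral_const,
          Real.volume_uIoc, sub_zero, Real.enorm_eq_ofReal_abs, mul_comm]

theorem integrable_sub_comp_sub {f : ℝ → E} (hf : Differentiable ℝ f)
    (hf' : Integrable (deriv f)) (δ : ℝ) : Integrable (fun u => f u - f (u - δ)) :=
  ⟨(hf.continuous.sub (hf.continuous.comp (continuous_sub_right δ))).aestronglyMeasurable,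
    (lintegral_enorm_sub_comp_sub_le hf hf' δ).trans_lt
      (ENNReal.mul_lt_top enorm_lt_top hf'.hasFiniteIntegral)⟩

theorem integral_norm_sub_comp_sub_le {f : ℝ → E} (hf : Differentiable ℝ f)
    (hf' : Integrable (deriv f)) (δ : ℝ) :
    ∫ u, ‖f u - f (u - δ)‖ ≤ |δ| * ∫ u, ‖deriv f u‖ := by
  rw [integral_norm_eq_lintegral_enorm (integrable_sub_comp_sub hf hf' δ).aestronglyMeasurable,
    integral_norm_eq_lintegral_enorm hf'.aestronglyMeasurable, ← Real.norm_eq_abs,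
    ← toReal_enorm, ← ENNReal.toReal_mul]
  exact ENNReal.toReal_mono (ENNReal.mul_ne_top enorm_ne_top hf'.hasFiniteIntegral.ne)
    (lintegral_enorm_sub_comp_sub_le hf hf' δ)

theorem integral_sq_sub_comp_sub_le {ψ : ℝ → ℝ} (hψ : Differentiable ℝ ψ)
    (hψ' : Integrable (deriv ψ)) {M : ℝ} (hM : ∀ u, |ψ u| ≤ M) (δ : ℝ) :
    ∫ u, (ψ u - ψ (u - δ)) ^ 2 ≤ 2 * M * |δ| * ∫ u, |deriv ψ u| := by
  have hsq : ∀ u, (ψ u - ψ (u - δ)) ^ 2 ≤ 2 * M * ‖ψ u - ψ (u - δ)‖ := fun u => by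
    rw [← sq_abs, sq, Real.norm_eq_abs]
    gcongr
    exact (abs_sub _ _).trans (by linarith [hM u, hM (u - δ)])
  calc ∫ u, (ψ u - ψ (u - δ)) ^ 2
      ≤ ∫ u, 2 * M * ‖ψ u - ψ (u - δ)‖ :=
        integral_mono_of_nonneg (ae_of_all _ fun _ => sq_nonneg _)
          ((integrable_sub_comp_sub hψ hψ' δ).norm.const_mul _) (ae_of_all _ hsq)
    _ ≤ 2 * M * (|δ| * ∫ u, ‖deriv ψ u‖) := by
        rw [integral_const_mul]
        gcongr
        · linarith [hM 0, abs_nonneg (ψ 0)]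
        · exact integral_norm_sub_comp_sub_le hψ hψ' δ
    _ = 2 * M * |δ| * ∫ u, |deriv ψ u| := by simp only [Real.norm_eq_abs, mul_assoc]

/-- For a differentiable `ψ` with `|ψ(u)| ≤ A(1+u²)^{−1/2}` and `|ψ'(u)| ≤ A(1+u²)^{−1}`,
the squared `L²` distance between two translates on the same scale is Lipschitz in the
translation: `∫ (ψ((s−a)/h) − ψ((s−b)/h))² ds ≤ C|a−b|`. -/
theorem sq_L2_translates_le
    (A : ℝ) (hA : 0 < A) (ψ : ℝ → ℝ) (hψ_diff : Differentiable ℝ ψ)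
    (hψ : ∀ u : ℝ, |ψ u| ≤ A * (1 + u ^ 2) ^ (-(1:ℝ)/2))
    (hψ' : ∀ u : ℝ, |deriv ψ u| ≤ A * (1 + u ^ 2)⁻¹) :
    ∃ C : ℝ, 0 < C ∧ ∀ h : ℝ, 0 < h → ∀ a b : ℝ,
      ∫ s : ℝ, (ψ ((s - a) / h) - ψ ((s - b) / h)) ^ 2 ≤ C * |a - b| := by
  have hbound (u : ℝ) : |ψ u| ≤ A :=
    (hψ u).trans (mul_le_of_le_one_right hA.le
      (Real.rpow_le_one_of_one_le_of_nonpos (by nlinarith) (by norm_num)))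
  have hdecay : Integrable (fun u : ℝ => A * (1 + u ^ 2)⁻¹) :=
    integrable_inv_one_add_sq.const_mul A
  have hint : Integrable (deriv ψ) :=
    hdecay.mono' (stronglyMeasurable_deriv ψ).aestronglyMeasurable (ae_of_all _ hψ')
  have hL1 : ∫ u, |deriv ψ u| ≤ A * Real.pi := by
    rw [← integral_univ_inv_one_add_sq, ← integral_const_mul]
    exact integral_mono_of_nonneg (ae_of_all _ fun _ => abs_nonneg _) hdecay (ae_of_all _ hψ')
  refine ⟨2 * A ^ 2 * Real.pi, by positivity, fun h hh a b => ?_⟩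
  have hshift (s : ℝ) : (s - b) / h = (s - a) / h - (b - a) / h := by ring
  set δ := (b - a) / h
  calc ∫ s, (ψ ((s - a) / h) - ψ ((s - b) / h)) ^ 2
      = h * ∫ u, (ψ u - ψ (u - δ)) ^ 2 := by
        simp_rw [hshift]
        rw [integral_sub_right_eq_self (fun s => (ψ (s / h) - ψ (s / h - δ)) ^ 2) a,
          Measure.integral_comp_div (fun u => (ψ u - ψ (u - δ)) ^ 2), abs_of_pos hh, smul_eq_mul]
    _ ≤ h * (2 * A * |δ| * (A * Real.pi)) := by
        gcongr
        exact (integral_sq_sub_comp_sub_le hψ_diff hint hbound δ).trans (by gcongr)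
    _ = 2 * A ^ 2 * Real.pi * |a - b| := by
        rw [abs_div, abs_of_pos hh, abs_sub_comm]
        field_simp
end

section
/- Let A > 0 and let ψ : ℝ → ℝ be differentiable with |ψ(u)| ≤ A (1 + u²)^{−1/2} and |ψ'(u)| ≤ A (1 + u²)^{−1} for all u ∈ ℝ. Then there exists a constant C > 0 depending only on A such that for all 0 < h ≤ h' and every a ∈ ℝ, ∫_ℝ ( ψ((s − a)/h) − ψ((s − a)/h') )² ds ≤ C (h' − h). -/
open MeasureTheory Real

section Aux

variable {A : ℝ} {ψ : ℝ → ℝ}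

lemma psi_sq_le (hψ : ∀ u : ℝ, |ψ u| ≤ A * (1 + u ^ 2) ^ (-(1:ℝ)/2)) (u : ℝ) :
    (ψ u) ^ 2 ≤ A ^ 2 * (1 + u ^ 2)⁻¹ := by
  have h1 : (0:ℝ) < 1 + u ^ 2 := by positivity
  have h2 : ((1 + u ^ 2 : ℝ) ^ (-(1:ℝ)/2)) ^ 2 = (1 + u ^ 2)⁻¹ := by
    rw [← Real.rpow_natCast ((1 + u ^ 2 : ℝ) ^ (-(1:ℝ)/2)) 2, ← Real.rpow_mul h1.le]
    norm_num [Real.rpow_neg_one]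
  calc (ψ u) ^ 2 = |ψ u| ^ 2 := (sq_abs _).symm
    _ ≤ (A * (1 + u ^ 2) ^ (-(1:ℝ)/2)) ^ 2 := by
        exact pow_le_pow_left₀ (abs_nonneg _) (hψ u) 2
    _ = A ^ 2 * ((1 + u ^ 2) ^ (-(1:ℝ)/2)) ^ 2 := by ring
    _ = A ^ 2 * (1 + u ^ 2)⁻¹ := by rw [h2]

lemma psi_sq_integrable (hψ_diff : Differentiable ℝ ψ)
    (hψ : ∀ u : ℝ, |ψ u| ≤ A * (1 + u ^ 2) ^ (-(1:ℝ)/2)) :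
    Integrable (fun u : ℝ => (ψ u) ^ 2) := by
  refine Integrable.mono ((integrable_inv_one_add_sq).const_mul (A ^ 2))
    ((hψ_diff.continuous.pow 2).aestronglyMeasurable) ?_
  filter_upwards with u
  have h1 : (0:ℝ) < 1 + u ^ 2 := by positivity
  have := psi_sq_le hψ u
  rw [Real.norm_eq_abs, Real.norm_eq_abs, abs_of_nonneg (sq_nonneg _),
    abs_of_nonneg (by positivity : (0:ℝ) ≤ A ^ 2 * (1 + u ^ 2)⁻¹)]
  exact this

lemma psi_sq_integral_le (hψ_diff : Differentiable ℝ ψ)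
    (hψ : ∀ u : ℝ, |ψ u| ≤ A * (1 + u ^ 2) ^ (-(1:ℝ)/2)) :
    ∫ u : ℝ, (ψ u) ^ 2 ≤ A ^ 2 * π := by
  have h1 : ∫ u : ℝ, (ψ u) ^ 2 ≤ ∫ u : ℝ, A ^ 2 * (1 + u ^ 2)⁻¹ :=
    integral_mono (psi_sq_integrable hψ_diff hψ)
      ((integrable_inv_one_add_sq).const_mul (A ^ 2)) (psi_sq_le hψ)
  calc ∫ u : ℝ, (ψ u) ^ 2 ≤ ∫ u : ℝ, A ^ 2 * (1 + u ^ 2)⁻¹ := h1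
    _ = A ^ 2 * ∫ u : ℝ, (1 + u ^ 2)⁻¹ := integral_const_mul _ _
    _ = A ^ 2 * π := by rw [integral_univ_inv_one_add_sq]

/-- Pointwise bound on the difference of rescalings via the mean value theorem. -/
lemma pointwise_diff_le (hψ_diff : Differentiable ℝ ψ)
    (hψ' : ∀ u : ℝ, |deriv ψ u| ≤ A * (1 + u ^ 2)⁻¹) (hA : 0 ≤ A)
    {h h' : ℝ} (hh : 0 < h) (hle : h ≤ h') (x : ℝ) :
    |ψ (x / h) - ψ (x / h')| ≤ A * (h' - h) * |x| / (h ^ 2 + x ^ 2) := by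
  set g : ℝ → ℝ := fun t => deriv ψ (x / t) * (-x / t ^ 2) with hg
  have hd : ∀ t ∈ Set.Icc h h', HasDerivWithinAt (fun t => ψ (x / t)) (g t) (Set.Icc h h') t := by
    intro t ht
    have ht0 : t ≠ 0 := (lt_of_lt_of_le hh ht.1).ne'
    have h1 : HasDerivAt (fun t : ℝ => x / t) (-x / t ^ 2) t := by
      have := (hasDerivAt_inv ht0).const_mul x
      simpa [div_eq_mul_inv, neg_div] using this
    exact (((hψ_diff (x / t)).hasDerivAt.comp t h1)).hasDerivWithinAt
  have hbound : ∀ t ∈ Set.Icc h h', ‖g t‖ ≤ A * |x| / (h ^ 2 + x ^ 2) := by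
    intro t ht
    have ht0 : 0 < t := lt_of_lt_of_le hh ht.1
    have hpos : (0:ℝ) < t ^ 2 + x ^ 2 := by positivity
    have hpos2 : (0:ℝ) < h ^ 2 + x ^ 2 := by positivity
    have e1 : ‖g t‖ = |deriv ψ (x / t)| * (|x| / t ^ 2) := by
      rw [hg]
      simp only [Real.norm_eq_abs, abs_mul, abs_div, abs_neg, abs_pow, sq_abs]
    rw [e1]
    have e2 : (1 + (x / t) ^ 2)⁻¹ = t ^ 2 / (t ^ 2 + x ^ 2) := by
      rw [div_pow]
      rw [inv_eq_one_div]
      field_simp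
    have step1 : |deriv ψ (x / t)| * (|x| / t ^ 2) ≤ (A * (1 + (x / t) ^ 2)⁻¹) * (|x| / t ^ 2) := by
      apply mul_le_mul_of_nonneg_right (hψ' (x / t)) (by positivity)
    have step2 : (A * (1 + (x / t) ^ 2)⁻¹) * (|x| / t ^ 2) = A * |x| / (t ^ 2 + x ^ 2) := by
      rw [e2]; field_simp
    have step3 : A * |x| / (t ^ 2 + x ^ 2) ≤ A * |x| / (h ^ 2 + x ^ 2) := by
      apply div_le_div_of_nonneg_left (by positivity) hpos2
      nlinarith [ht.1, hh]
    calc |deriv ψ (x / t)| * (|x| / t ^ 2) ≤ (A * (1 + (x / t) ^ 2)⁻¹) * (|x| / t ^ 2) := step1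
      _ = A * |x| / (t ^ 2 + x ^ 2) := step2
      _ ≤ A * |x| / (h ^ 2 + x ^ 2) := step3
  have := Convex.norm_image_sub_le_of_norm_hasDerivWithin_le hd hbound (convex_Icc h h')
    (Set.right_mem_Icc.mpr hle) (Set.left_mem_Icc.mpr hle)
  rw [Real.norm_eq_abs, Real.norm_eq_abs] at this
  have habs : |h - h'| = h' - h := by
    rw [abs_sub_comm]; exact abs_of_nonneg (by linarith)
  calc |ψ (x / h) - ψ (x / h')| ≤ A * |x| / (h ^ 2 + x ^ 2) * |h - h'| := this
    _ = A * (h' - h) * |x| / (h ^ 2 + x ^ 2) := by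
        rw [habs]; ring

end Aux

/-- For a differentiable `ψ` with `|ψ(u)| ≤ A(1+u²)^{−1/2}` and `|ψ'(u)| ≤ A(1+u²)^{−1}`,
the squared `L²` distance between two rescalings at the same location is Lipschitz in the
bandwidth: `∫ (ψ((s−a)/h) − ψ((s−a)/h'))² ds ≤ C(h'−h)` for `0 < h ≤ h'`. -/
theorem sq_L2_rescalings_le
    (A : ℝ) (hA : 0 < A) (ψ : ℝ → ℝ) (hψ_diff : Differentiable ℝ ψ)
    (hψ : ∀ u : ℝ, |ψ u| ≤ A * (1 + u ^ 2) ^ (-(1:ℝ)/2))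
    (hψ' : ∀ u : ℝ, |deriv ψ u| ≤ A * (1 + u ^ 2)⁻¹) :
    ∃ C : ℝ, 0 < C ∧ ∀ h h' : ℝ, 0 < h → h ≤ h' → ∀ a : ℝ,
      ∫ s : ℝ, (ψ ((s - a) / h) - ψ ((s - a) / h')) ^ 2 ≤ C * (h' - h) := by
  refine ⟨10 * π * A ^ 2, by positivity, ?_⟩
  intro h h' hh hle a
  have hh' : 0 < h' := lt_of_lt_of_le hh hle
  have hsub : (∫ s : ℝ, (ψ ((s - a) / h) - ψ ((s - a) / h')) ^ 2)
      = ∫ x : ℝ, (ψ (x / h) - ψ (x / h')) ^ 2 :=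
    integral_sub_right_eq_self (fun x => (ψ (x / h) - ψ (x / h')) ^ 2) a
  rw [hsub]
  have hπ : (0:ℝ) < π := Real.pi_pos
  rcases le_or_gt h' (2 * h) with hcase | hcase
  · -- close bandwidths: use the pointwise MVT bound
    set c : ℝ := A ^ 2 * (h' - h) ^ 2 * (h⁻¹ * h⁻¹) with hc
    have hcnn : 0 ≤ c := by positivity
    have hgint : Integrable (fun x : ℝ => c * (1 + (x / h) ^ 2)⁻¹) :=
      (integrable_inv_one_add_sq.comp_div hh.ne').const_mul c
    have hptwise : ∀ x : ℝ, (ψ (x / h) - ψ (x / h')) ^ 2 ≤ c * (1 + (x / h) ^ 2)⁻¹ := by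
      intro x
      have hpos : (0:ℝ) < h ^ 2 + x ^ 2 := by positivity
      have hb := pointwise_diff_le hψ_diff hψ' hA.le hh hle x
      have e2 : c * (1 + (x / h) ^ 2)⁻¹ = A ^ 2 * (h' - h) ^ 2 * (h ^ 2 + x ^ 2)⁻¹ := by
        rw [hc]
        have : (1 + (x / h) ^ 2)⁻¹ = h ^ 2 / (h ^ 2 + x ^ 2) := by
          rw [div_pow, inv_eq_one_div]; field_simp
        rw [this]; field_simp
      rw [e2]
      have step1 : (ψ (x / h) - ψ (x / h')) ^ 2
          ≤ (A * (h' - h) * |x| / (h ^ 2 + x ^ 2)) ^ 2 := by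
        rw [← sq_abs]
        exact pow_le_pow_left₀ (abs_nonneg _) hb 2
      have step2 : (A * (h' - h) * |x| / (h ^ 2 + x ^ 2)) ^ 2
          ≤ A ^ 2 * (h' - h) ^ 2 * (h ^ 2 + x ^ 2)⁻¹ := by
        rw [div_pow, mul_pow, mul_pow, sq_abs, div_le_iff₀ (by positivity)]
        have e3 : A ^ 2 * (h' - h) ^ 2 * (h ^ 2 + x ^ 2)⁻¹ * ((h ^ 2 + x ^ 2) ^ 2)
            = A ^ 2 * (h' - h) ^ 2 * (h ^ 2 + x ^ 2) := by
          field_simp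
        rw [e3]
        nlinarith [sq_nonneg (A * (h' - h) * h), sq_nonneg (A * (h' - h)), sq_nonneg h]
      exact le_trans step1 step2
    have hmono : ∫ x : ℝ, (ψ (x / h) - ψ (x / h')) ^ 2
        ≤ ∫ x : ℝ, c * (1 + (x / h) ^ 2)⁻¹ :=
      integral_mono_of_nonneg (Filter.Eventually.of_forall fun x => sq_nonneg _) hgint
        (Filter.Eventually.of_forall hptwise)
    have hval : ∫ x : ℝ, c * (1 + (x / h) ^ 2)⁻¹ = c * (h * π) := by
      rw [integral_const_mul]
      have := MeasureTheory.Measure.integral_comp_div (fun u : ℝ => (1 + u ^ 2)⁻¹) h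
      rw [this, integral_univ_inv_one_add_sq, abs_of_pos hh, smul_eq_mul]
    rw [hval] at hmono
    refine le_trans hmono ?_
    have hd1 : 0 ≤ h' - h := by linarith
    have hd2 : h' - h ≤ h := by linarith
    have e4 : c * (h * π) = π * A ^ 2 * ((h' - h) * ((h' - h) * (h⁻¹ * (h⁻¹ * h)))) := by
      rw [hc]; ring
    rw [e4, inv_mul_cancel₀ hh.ne', mul_one]
    have h5 : (h' - h) * h⁻¹ ≤ 1 := by
      rw [← div_eq_mul_inv, div_le_one hh]; exact hd2
    have h6 : (h' - h) * ((h' - h) * h⁻¹) ≤ (h' - h) * 1 :=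
      mul_le_mul_of_nonneg_left h5 hd1
    have hA2 : (0:ℝ) < A ^ 2 := by positivity
    nlinarith [mul_pos hπ hA2]
  · -- far bandwidths: use the crude L² bound
    have key : ∀ t : ℝ, 0 < t →
        Integrable (fun x : ℝ => (ψ (x / t)) ^ 2) ∧
        (∫ x : ℝ, (ψ (x / t)) ^ 2) ≤ t * (A ^ 2 * π) := by
      intro t ht
      constructor
      · exact (psi_sq_integrable hψ_diff hψ).comp_div ht.ne'
      · have e1 : (∫ x : ℝ, (ψ (x / t)) ^ 2) = |t| • ∫ u : ℝ, (ψ u) ^ 2 :=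
          MeasureTheory.Measure.integral_comp_div (fun u : ℝ => (ψ u) ^ 2) t
        rw [e1, abs_of_pos ht, smul_eq_mul]
        exact mul_le_mul_of_nonneg_left (psi_sq_integral_le hψ_diff hψ) ht.le
    obtain ⟨hint1, hval1⟩ := key h hh
    obtain ⟨hint2, hval2⟩ := key h' hh'
    have hptwise : ∀ x : ℝ, (ψ (x / h) - ψ (x / h')) ^ 2
        ≤ 2 * (ψ (x / h)) ^ 2 + 2 * (ψ (x / h')) ^ 2 := by
      intro x; nlinarith [sq_nonneg (ψ (x / h) + ψ (x / h'))]
    have hgint : Integrable (fun x : ℝ => 2 * (ψ (x / h)) ^ 2 + 2 * (ψ (x / h')) ^ 2) :=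
      (hint1.const_mul 2).add (hint2.const_mul 2)
    have hmono : ∫ x : ℝ, (ψ (x / h) - ψ (x / h')) ^ 2
        ≤ ∫ x : ℝ, (2 * (ψ (x / h)) ^ 2 + 2 * (ψ (x / h')) ^ 2) :=
      integral_mono_of_nonneg (Filter.Eventually.of_forall fun x => sq_nonneg _) hgint
        (Filter.Eventually.of_forall hptwise)
    have hsplit : ∫ x : ℝ, (2 * (ψ (x / h)) ^ 2 + 2 * (ψ (x / h')) ^ 2)
        = 2 * (∫ x : ℝ, (ψ (x / h)) ^ 2) + 2 * (∫ x : ℝ, (ψ (x / h')) ^ 2) := by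
      rw [integral_add (hint1.const_mul 2) (hint2.const_mul 2),
        integral_const_mul, integral_const_mul]
    rw [hsplit] at hmono
    refine le_trans hmono ?_
    have hA2 : (0:ℝ) < A ^ 2 := by positivity
    nlinarith [hval1, hval2, mul_pos hA2 hπ]
end

section
/- Let A, B, M > 0, let ψ : ℝ → ℝ be measurable with |ψ(s)| ≤ A (1 + s²)^{−1/2} for all s ∈ ℝ, and let F : ℝ → [0, ∞) be measurable with F(s) ≤ B for all s and F(s) ≤ B/(log |s|)² for all |s| ≥ 2. Then there exist h₀ ∈ (0, 1) and C > 0, depending only on A, B and M, such that for every h ∈ (0, h₀] and every z ∈ ℝ with |z| ≤ M, ∫_ℝ |ψ(s)| F(hs + z) ds ≤ C (log h)². -/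
/-!
Bound `|ψ s|` by `A (1 + s²)^{-1/2} ≤ A / |s|`, and `F (h s + z)` by `B` while
`|s| ≤ S := (M + 2) / h`; beyond `S` one has `|h s + z| ≥ 2 |s| / S ≥ 2`, hence
`F (h s + z) ≤ B (log (2 |s| / S))⁻²`. The region `|s| ≤ S` contributes
`2 A B arsinh S ≤ 2 A B log ((2M + 5) / h)`, and the tail
`2 A B ∫_S^∞ dt / (t log² (2t / S)) = 2 A B / log 2`; both are `O(log² h)` once `h ≤ e⁻¹`.
-/

open MeasureTheory Set Filter Topology Real

lemma integrable_comp_abs_of_integrableOn_Ioi {f : ℝ → ℝ} (hf : IntegrableOn f (Ioi 0)) :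
    Integrable fun x => f |x| := by
  have hIoi : IntegrableOn (fun x => f |x|) (Ioi 0) :=
    hf.congr_fun (fun x hx => by rw [abs_of_pos hx]) measurableSet_Ioi
  have hIic : IntegrableOn (fun x => f |x|) (Iic 0) := by
    have hneg : MeasurableEmbedding fun x : ℝ => -x := (Homeomorph.neg ℝ).measurableEmbedding
    rw [← Measure.map_neg_eq_self (volume : Measure ℝ), hneg.integrableOn_map_iff]
    simp_rw [Function.comp_def, abs_neg, neg_preimage, neg_Iic, neg_zero]
    exact (integrableOn_Ici_iff_integrableOn_Ioi).mpr hIoi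
  rw [← integrableOn_univ, ← Iic_union_Ioi (a := (0 : ℝ))]
  exact hIic.union hIoi

section LogTail

variable {c S : ℝ}

lemma hasDerivAt_neg_inv_log_const_mul {t : ℝ} (hc : 0 < c) (ht : 0 < t)
    (hlog : log (c * t) ≠ 0) :
    HasDerivAt (fun x => -(log (c * x))⁻¹) (t⁻¹ * (log (c * t))⁻¹ ^ 2) t := by
  have hmul : HasDerivAt (fun x => c * x) c t := by simpa using (hasDerivAt_id t).const_mul c
  exact (((hasDerivAt_log (by positivity)).comp t hmul).inv hlog).neg.congr_deriv
    (by rw [Function.comp_apply]; field_simp)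

lemma integral_Ioi_inv_mul_inv_log_const_mul_sq (hc : 0 < c) (hcS : 1 < c * S) :
    IntegrableOn (fun t => t⁻¹ * (log (c * t))⁻¹ ^ 2) (Ioi S) ∧
      ∫ t in Ioi S, t⁻¹ * (log (c * t))⁻¹ ^ 2 = (log (c * S))⁻¹ := by
  have hS : 0 < S := pos_of_mul_pos_right (one_pos.trans hcS) hc.le
  have hderiv : ∀ x ∈ Ici S, HasDerivAt (fun x => -(log (c * x))⁻¹)
      (x⁻¹ * (log (c * x))⁻¹ ^ 2) x := fun x hx =>
    hasDerivAt_neg_inv_log_const_mul hc (hS.trans_le hx) (log_pos (hcS.trans_le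
      (mul_le_mul_of_nonneg_left hx hc.le))).ne'
  have hnonneg : ∀ x ∈ Ioi S, 0 ≤ x⁻¹ * (log (c * x))⁻¹ ^ 2 := fun x hx => by
    have : 0 < x := hS.trans hx
    positivity
  have htendsto : Tendsto (fun x => -(log (c * x))⁻¹) atTop (𝓝 0) := by
    simpa using (tendsto_log_atTop.comp (tendsto_id.const_mul_atTop hc)).inv_tendsto_atTop.neg
  refine ⟨integrableOn_Ioi_deriv_of_nonneg' hderiv hnonneg htendsto, ?_⟩
  simpa using integral_Ioi_of_hasDerivAt_of_nonneg' hderiv hnonneg htendsto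

end LogTail

lemma one_add_sq_rpow_neg_half (s : ℝ) : (1 + s ^ 2) ^ (-(1 : ℝ) / 2) = (√(1 + s ^ 2))⁻¹ := by
  rw [sqrt_eq_rpow, ← rpow_neg (by positivity)]
  norm_num

lemma inv_sqrt_one_add_sq_le_inv_abs {s : ℝ} (hs : s ≠ 0) : (√(1 + s ^ 2))⁻¹ ≤ |s|⁻¹ := by
  rw [← sqrt_sq_eq_abs]
  gcongr
  simp

lemma continuous_inv_sqrt_one_add_sq : Continuous fun x : ℝ => (√(1 + x ^ 2))⁻¹ :=
  (by fun_prop : Continuous fun x : ℝ => 1 + x ^ 2).sqrt.inv₀ fun x => by positivity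

lemma integral_inv_sqrt_one_add_sq (a b : ℝ) :
    ∫ x in a..b, (√(1 + x ^ 2))⁻¹ = arsinh b - arsinh a :=
  intervalIntegral.integral_eq_sub_of_hasDerivAt (fun x _ => hasDerivAt_arsinh x)
    (continuous_inv_sqrt_one_add_sq.intervalIntegrable a b)

lemma arsinh_le_log_one_add_two_mul {x : ℝ} (hx : 0 ≤ x) : arsinh x ≤ log (1 + 2 * x) := by
  rw [le_log_iff_exp_le (by positivity), exp_arsinh]
  have : √(1 + x ^ 2) ≤ 1 + x := sqrt_le_iff.mpr ⟨by positivity, by nlinarith⟩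
  linarith

/-- Majorant of `|ψ s| F (h s + z) / (A B)` as a function of `|s|`, with `S = (M + 2) / h`. -/
noncomputable def kernelLogMajorant (S t : ℝ) : ℝ :=
  if t ≤ S then (√(1 + t ^ 2))⁻¹ else t⁻¹ * (log (2 / S * t))⁻¹ ^ 2

section kernelLogMajorant

variable {S t : ℝ}

lemma kernelLogMajorant_of_le (ht : t ≤ S) : kernelLogMajorant S t = (√(1 + t ^ 2))⁻¹ :=
  if_pos ht

lemma kernelLogMajorant_of_lt (ht : S < t) :
    kernelLogMajorant S t = t⁻¹ * (log (2 / S * t))⁻¹ ^ 2 :=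
  if_neg (not_le.mpr ht)

lemma integrableOn_kernelLogMajorant (hS : 0 < S) :
    IntegrableOn (kernelLogMajorant S) (Ioi 0) := by
  have htail := (integral_Ioi_inv_mul_inv_log_const_mul_sq (div_pos two_pos hS)
    (by rw [div_mul_cancel₀ _ hS.ne']; norm_num)).1
  rw [← Ioc_union_Ioi_eq_Ioi hS.le]
  refine IntegrableOn.union ?_ ?_
  · exact continuous_inv_sqrt_one_add_sq.integrableOn_Ioc.congr_fun
      (fun t ht => (kernelLogMajorant_of_le ht.2).symm) measurableSet_Ioc
  · exact htail.congr_fun (fun t ht => (kernelLogMajorant_of_lt ht).symm) measurableSet_Ioi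

lemma integral_Ioi_kernelLogMajorant (hS : 0 < S) :
    ∫ t in Ioi 0, kernelLogMajorant S t = arsinh S + (log 2)⁻¹ := by
  have htail := integral_Ioi_inv_mul_inv_log_const_mul_sq (div_pos two_pos hS)
    (by rw [div_mul_cancel₀ _ hS.ne']; norm_num)
  have hint := integrableOn_kernelLogMajorant hS
  rw [← Ioc_union_Ioi_eq_Ioi hS.le] at hint ⊢
  rw [setIntegral_union Ioc_disjoint_Ioi_same measurableSet_Ioi
      (hint.mono_set subset_union_left) (hint.mono_set subset_union_right),
    setIntegral_congr_fun measurableSet_Ioc fun t ht => kernelLogMajorant_of_le ht.2,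
    setIntegral_congr_fun measurableSet_Ioi fun t ht => kernelLogMajorant_of_lt ht,
    ← intervalIntegral.integral_of_le hS.le, integral_inv_sqrt_one_add_sq, htail.2,
    div_mul_cancel₀ _ hS.ne', arsinh_zero, sub_zero]

end kernelLogMajorant

lemma le_mul_inv_log_sq_of_le_abs {F : ℝ → ℝ} {B u v : ℝ} (hB : 0 ≤ B)
    (hF_log : ∀ s : ℝ, 2 ≤ |s| → F s ≤ B / log |s| ^ 2) (hv : 2 ≤ v) (hvu : v ≤ |u|) :
    F u ≤ B * (log v)⁻¹ ^ 2 := by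
  have hlogv : 0 < log v := log_pos (by linarith)
  calc F u ≤ B / log |u| ^ 2 := hF_log u (hv.trans hvu)
    _ ≤ B / log v ^ 2 := by gcongr
    _ = B * (log v)⁻¹ ^ 2 := by rw [div_eq_mul_inv, inv_pow]

lemma two_div_mul_abs_le_abs_mul_add {M h s z : ℝ} (hM : 0 ≤ M) (hh : 0 < h) (hz : |z| ≤ M)
    (hs : (M + 2) / h ≤ |s|) : 2 / ((M + 2) / h) * |s| ≤ |h * s + z| := by
  have hhs : M + 2 ≤ h * |s| := by rwa [div_le_iff₀' hh] at hs
  have hrev : h * |s| ≤ |h * s + z| + |z| := by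
    calc h * |s| = |(h * s + z) - z| := by rw [add_sub_cancel_right, abs_mul, abs_of_pos hh]
      _ ≤ |h * s + z| + |z| := abs_sub _ _
  rw [div_div_eq_mul_div, div_mul_eq_mul_div, div_le_iff₀ (by positivity)]
  nlinarith [mul_nonneg hM (sub_nonneg.mpr hhs)]

lemma abs_mul_comp_affine_le_kernelLogMajorant {ψ F : ℝ → ℝ} {A B M h z : ℝ} (hA : 0 ≤ A)
    (hB : 0 ≤ B) (hM : 0 ≤ M) (hψ : ∀ s : ℝ, |ψ s| ≤ A * (1 + s ^ 2) ^ (-(1 : ℝ) / 2))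
    (hF_nonneg : ∀ s, 0 ≤ F s) (hF_bdd : ∀ s, F s ≤ B)
    (hF_log : ∀ s : ℝ, 2 ≤ |s| → F s ≤ B / log |s| ^ 2) (hh : 0 < h) (hz : |z| ≤ M) (s : ℝ) :
    |ψ s| * F (h * s + z) ≤ A * B * kernelLogMajorant ((M + 2) / h) |s| := by
  set S := (M + 2) / h
  have hψ' : |ψ s| ≤ A * (√(1 + s ^ 2))⁻¹ := one_add_sq_rpow_neg_half s ▸ hψ s
  rcases le_or_gt |s| S with hs | hs
  · rw [kernelLogMajorant_of_le hs, sq_abs, mul_right_comm]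
    exact mul_le_mul hψ' (hF_bdd _) (hF_nonneg _) (by positivity)
  · have hS : 0 < S := by positivity
    have hs0 : s ≠ 0 := abs_pos.mp (hS.trans hs)
    have hlog : 2 ≤ 2 / S * |s| := by
      rw [div_mul_eq_mul_div, le_div_iff₀ hS]
      linarith
    rw [kernelLogMajorant_of_lt hs, mul_mul_mul_comm]
    exact mul_le_mul
      (hψ'.trans (mul_le_mul_of_nonneg_left (inv_sqrt_one_add_sq_le_inv_abs hs0) hA))
      (le_mul_inv_log_sq_of_le_abs hB hF_log hlog
        (two_div_mul_abs_le_abs_mul_add hM hh hz hs.le))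
      (hF_nonneg _) (by positivity)

lemma integral_abs_mul_comp_affine_le {ψ F : ℝ → ℝ} {A B M h z : ℝ} (hA : 0 ≤ A)
    (hB : 0 ≤ B) (hM : 0 ≤ M) (hψ : ∀ s : ℝ, |ψ s| ≤ A * (1 + s ^ 2) ^ (-(1 : ℝ) / 2))
    (hF_nonneg : ∀ s, 0 ≤ F s) (hF_bdd : ∀ s, F s ≤ B)
    (hF_log : ∀ s : ℝ, 2 ≤ |s| → F s ≤ B / log |s| ^ 2) (hh : 0 < h) (hz : |z| ≤ M) :
    ∫ s, |ψ s| * F (h * s + z) ≤ 2 * A * B * (arsinh ((M + 2) / h) + (log 2)⁻¹) := by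
  have hS : 0 < (M + 2) / h := by positivity
  calc ∫ s, |ψ s| * F (h * s + z)
      ≤ ∫ s, A * B * kernelLogMajorant ((M + 2) / h) |s| :=
        integral_mono_of_nonneg (ae_of_all _ fun s => mul_nonneg (abs_nonneg _) (hF_nonneg _))
          ((integrable_comp_abs_of_integrableOn_Ioi
            (integrableOn_kernelLogMajorant hS)).const_mul _)
          (ae_of_all _ (abs_mul_comp_affine_le_kernelLogMajorant hA hB hM hψ hF_nonneg hF_bdd
            hF_log hh hz))
    _ = 2 * A * B * (arsinh ((M + 2) / h) + (log 2)⁻¹) := by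
        rw [integral_const_mul, integral_comp_abs (f := kernelLogMajorant _),
          integral_Ioi_kernelLogMajorant hS]
        ring

lemma arsinh_div_add_le_mul_log_sq {a h K : ℝ} (ha : 0 ≤ a) (hK : 0 ≤ K) (hh : 0 < h)
    (hh₀ : h ≤ exp (-1)) :
    arsinh (a / h) + K ≤ (log (1 + 2 * a) + K + 1) * log h ^ 2 := by
  have hL : 1 ≤ -log h := by
    have := log_le_log hh hh₀
    rw [log_exp] at this
    linarith
  have hh1 : h ≤ 1 := hh₀.trans (exp_le_one_iff.mpr (by norm_num))
  have harsinh : arsinh (a / h) ≤ log (1 + 2 * a) - log h := by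
    rw [← log_div (by positivity) hh.ne']
    refine (arsinh_le_log_one_add_two_mul (by positivity)).trans (log_le_log (by positivity) ?_)
    rw [le_div_iff₀ hh, add_mul, one_mul, mul_assoc, div_mul_cancel₀ _ hh.ne']
    linarith
  have hloga : 0 ≤ log (1 + 2 * a) := log_nonneg (by linarith)
  nlinarith [mul_nonneg (add_nonneg hloga hK) (sub_nonneg.mpr (one_le_pow₀ (n := 2) hL)),
    neg_sq (log h)]

theorem integral_abs_kernel_mul_log_decay_le_general
    (A B M : ℝ) (hA : 0 < A) (hB : 0 < B) (hM : 0 < M)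
    (ψ : ℝ → ℝ)
    (hψ : ∀ s : ℝ, |ψ s| ≤ A * (1 + s ^ 2) ^ (-(1:ℝ)/2))
    (F : ℝ → ℝ) (hF_nonneg : ∀ s, 0 ≤ F s)
    (hF_bdd : ∀ s, F s ≤ B)
    (hF_log : ∀ s : ℝ, 2 ≤ |s| → F s ≤ B / Real.log |s| ^ 2) :
    ∃ h₀ C : ℝ, 0 < h₀ ∧ h₀ < 1 ∧ 0 < C ∧
      ∀ h : ℝ, 0 < h → h ≤ h₀ → ∀ z : ℝ, |z| ≤ M →
        ∫ s : ℝ, |ψ s| * F (h * s + z) ≤ C * Real.log h ^ 2 := by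
  have hlog2 : 0 < (log 2)⁻¹ := inv_pos.mpr (log_pos one_lt_two)
  have hlogM : 0 ≤ log (1 + 2 * (M + 2)) := log_nonneg (by linarith)
  refine ⟨exp (-1), 2 * A * B * (log (1 + 2 * (M + 2)) + (log 2)⁻¹ + 1), exp_pos _,
    exp_lt_one_iff.mpr (by norm_num), by positivity, fun h hh hh₀ z hz => ?_⟩
  calc ∫ s, |ψ s| * F (h * s + z)
      ≤ 2 * A * B * (arsinh ((M + 2) / h) + (log 2)⁻¹) :=
        integral_abs_mul_comp_affine_le hA.le hB.le hM.le hψ hF_nonneg hF_bdd hF_log hh hz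
    _ ≤ 2 * A * B * ((log (1 + 2 * (M + 2)) + (log 2)⁻¹ + 1) * log h ^ 2) := by
        gcongr
        exact arsinh_div_add_le_mul_log_sq (by linarith) hlog2.le hh hh₀
    _ = _ := by ring

/-- For `ψ` with Cauchy-type decay and `F` bounded with logarithmic decay, the smoothed
integral `∫ |ψ(s)| F(hs+z) ds` is of order `(log h)²` uniformly over `|z| ≤ M` and small
bandwidths `h`. -/
theorem integral_abs_kernel_mul_log_decay_le
    (A B M : ℝ) (hA : 0 < A) (hB : 0 < B) (hM : 0 < M)
    (ψ : ℝ → ℝ) (hψ_meas : Measurable ψ)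
    (hψ : ∀ s : ℝ, |ψ s| ≤ A * (1 + s ^ 2) ^ (-(1:ℝ)/2))
    (F : ℝ → ℝ) (hF_meas : Measurable F) (hF_nonneg : ∀ s, 0 ≤ F s)
    (hF_bdd : ∀ s, F s ≤ B)
    (hF_log : ∀ s : ℝ, 2 ≤ |s| → F s ≤ B / Real.log |s| ^ 2) :
    ∃ h₀ C : ℝ, 0 < h₀ ∧ h₀ < 1 ∧ 0 < C ∧
      ∀ h : ℝ, 0 < h → h ≤ h₀ → ∀ z : ℝ, |z| ≤ M →
        ∫ s : ℝ, |ψ s| * F (h * s + z) ≤ C * Real.log h ^ 2 :=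
  integral_abs_kernel_mul_log_decay_le_general A B M hA hB hM ψ hψ F hF_nonneg hF_bdd hF_log
end

section
/- Let d ≥ 2 and γ, ε, L > 0, and let f : ℝ^d → [0, ∞) be measurable such that |f(x) − f(x')| ≤ L ‖x − x'‖^γ / (1 + ‖x‖^{d+γ+ε}) for all x, x' ∈ ℝ^d with ‖x‖ = ‖x'‖. Then there exists a constant C > 0 depending only on d, γ and ε such that for all θ, θ' ∈ S^{d−1}, ∫₀^∞ r^{d−1} |f(rθ) − f(rθ')| dr ≤ C L ‖θ − θ'‖^γ. Consequently, if g(θ) = ∫₀^∞ r^{d−1} f(rθ) dr is finite for some θ ∈ S^{d−1}, then it is finite for every θ ∈ S^{d−1} and |g(θ) − g(θ')| ≤ C L ‖θ − θ'‖^γ for all θ, θ' ∈ S^{d−1}. -/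
open MeasureTheory Set

private lemma phi_integrable (d : ℕ) (hd : 1 ≤ d) (γ ε : ℝ) (hγ : 0 < γ) (hε : 0 < ε) :
    IntegrableOn (fun r : ℝ => r ^ (d - 1) * r ^ γ / (1 + r ^ ((d : ℝ) + γ + ε)))
      (Set.Ioi (0:ℝ)) := by
  set p : ℝ := (d : ℝ) + γ + ε with hp
  have hmeas : Measurable (fun r : ℝ => r ^ (d - 1) * r ^ γ / (1 + r ^ p)) := by
    fun_prop
  have h01 : IntegrableOn (fun r : ℝ => r ^ (d - 1) * r ^ γ / (1 + r ^ p)) (Set.Ioc 0 1) := by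
    refine Integrable.mono' (integrable_const 1) hmeas.aestronglyMeasurable.restrict ?_
    filter_upwards [ae_restrict_mem measurableSet_Ioc] with r hr
    obtain ⟨hr0, hr1⟩ := hr
    have h1 : r ^ (d-1) ≤ 1 := pow_le_one₀ hr0.le hr1
    have h1' : (0:ℝ) ≤ r ^ (d-1) := pow_nonneg hr0.le _
    have h2 : r ^ γ ≤ 1 := Real.rpow_le_one hr0.le hr1 hγ.le
    have h2' : (0:ℝ) ≤ r ^ γ := Real.rpow_nonneg hr0.le _
    have h3 : (0:ℝ) ≤ r ^ p := Real.rpow_nonneg hr0.le _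
    rw [Real.norm_eq_abs, abs_of_nonneg (by positivity)]
    apply div_le_one_of_le₀
    · nlinarith
    · linarith
  have h1inf : IntegrableOn (fun r : ℝ => r ^ (d - 1) * r ^ γ / (1 + r ^ p)) (Set.Ioi 1) := by
    have hint : IntegrableOn (fun r : ℝ => r ^ (-(1+ε))) (Set.Ioi (1:ℝ)) :=
      integrableOn_Ioi_rpow_of_lt (by linarith) one_pos
    refine Integrable.mono' hint hmeas.aestronglyMeasurable.restrict ?_
    filter_upwards [ae_restrict_mem measurableSet_Ioi] with r hr
    have hr1 : (1:ℝ) < r := hr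
    have hr0 : (0:ℝ) < r := lt_trans one_pos hr1
    have h3 : (0:ℝ) < r ^ p := Real.rpow_pos_of_pos hr0 _
    rw [Real.norm_eq_abs, abs_of_nonneg (by positivity)]
    have hpow : r ^ (d-1) * r ^ γ = r ^ (((d:ℝ)-1) + γ) := by
      rw [Real.rpow_add hr0, ← Real.rpow_natCast r (d-1)]
      congr 2
      push_cast [Nat.cast_sub hd]
      ring
    rw [hpow]
    calc r ^ (((d:ℝ)-1) + γ) / (1 + r ^ p) ≤ r ^ (((d:ℝ)-1) + γ) / r ^ p := by
          apply div_le_div_of_nonneg_left (Real.rpow_nonneg hr0.le _) h3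
          linarith
      _ = r ^ (((d:ℝ)-1) + γ - p) := by rw [← Real.rpow_sub hr0]
      _ = r ^ (-(1+ε)) := by congr 1; rw [hp]; ring
  have hsub : Set.Ioi (0:ℝ) ⊆ Set.Ioc 0 1 ∪ Set.Ioi 1 := by
    intro x hx
    rcases le_or_gt x 1 with h | h
    · exact Or.inl ⟨hx, h⟩
    · exact Or.inr h
  exact (h01.union h1inf).mono_set hsub

/-- For a nonnegative `f` on `ℝ^d` satisfying the weighted Hölder condition
`|f(x) − f(x')| ≤ L‖x−x'‖^γ/(1+‖x‖^{d+γ+ε})` for `‖x‖ = ‖x'‖`, the radial integrals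
`∫₀^∞ r^{d−1}|f(rθ) − f(rθ')| dr` are Hölder in the direction; consequently the direction
density `g(θ) = ∫₀^∞ r^{d−1} f(rθ) dr` is finite for all directions as soon as it is finite
for one, and is Hölder continuous. -/
theorem radial_integral_hoelder
    (d : ℕ) (hd : 2 ≤ d) (γ ε L : ℝ) (hγ : 0 < γ) (hε : 0 < ε) (hL : 0 < L)
    (f : EuclideanSpace ℝ (Fin d) → ℝ) (hf_meas : Measurable f) (hf_nonneg : ∀ x, 0 ≤ f x)
    (hf : ∀ x x' : EuclideanSpace ℝ (Fin d), ‖x‖ = ‖x'‖ →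
      |f x - f x'| ≤ L * ‖x - x'‖ ^ γ / (1 + ‖x‖ ^ ((d : ℝ) + γ + ε))) :
    ∃ C : ℝ, 0 < C ∧
      (∀ θ θ' : EuclideanSpace ℝ (Fin d), ‖θ‖ = 1 → ‖θ'‖ = 1 →
        ∫ r in Set.Ioi (0:ℝ), r ^ (d - 1) * |f (r • θ) - f (r • θ')|
          ≤ C * L * ‖θ - θ'‖ ^ γ) ∧
      ((∃ θ₀ : EuclideanSpace ℝ (Fin d), ‖θ₀‖ = 1 ∧
          IntegrableOn (fun r : ℝ => r ^ (d - 1) * f (r • θ₀)) (Set.Ioi 0)) →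
        ∀ θ θ' : EuclideanSpace ℝ (Fin d), ‖θ‖ = 1 → ‖θ'‖ = 1 →
          IntegrableOn (fun r : ℝ => r ^ (d - 1) * f (r • θ)) (Set.Ioi 0) ∧
          |(∫ r in Set.Ioi (0:ℝ), r ^ (d - 1) * f (r • θ))
              - ∫ r in Set.Ioi (0:ℝ), r ^ (d - 1) * f (r • θ')|
            ≤ C * L * ‖θ - θ'‖ ^ γ) := by
  set p : ℝ := (d : ℝ) + γ + ε with hp
  set φ : ℝ → ℝ := fun r => r ^ (d - 1) * r ^ γ / (1 + r ^ p) with hφdef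
  have hφint : IntegrableOn φ (Set.Ioi (0:ℝ)) :=
    phi_integrable d (by omega) γ ε hγ hε
  set C₀ : ℝ := ∫ r in Set.Ioi (0:ℝ), φ r with hC₀def
  have hφnonneg : ∀ r ∈ Set.Ioi (0:ℝ), 0 ≤ φ r := by
    intro r hr
    have hr0 : (0:ℝ) < r := hr
    have := Real.rpow_nonneg hr0.le p
    have := Real.rpow_nonneg hr0.le γ
    have : (0:ℝ) ≤ r ^ (d-1) := pow_nonneg hr0.le _
    simp only [hφdef]
    positivity
  have hC₀ : 0 ≤ C₀ := setIntegral_nonneg measurableSet_Ioi hφnonneg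
  -- measurability of the radial slices
  have hmeasθ : ∀ θ : EuclideanSpace ℝ (Fin d), Measurable fun r : ℝ => f (r • θ) := by
    intro θ
    exact hf_meas.comp ((continuous_id.smul continuous_const).measurable)
  -- key pointwise bound
  have key : ∀ θ θ' : EuclideanSpace ℝ (Fin d), ‖θ‖ = 1 → ‖θ'‖ = 1 →
      ∀ r ∈ Set.Ioi (0:ℝ),
        r ^ (d - 1) * |f (r • θ) - f (r • θ')| ≤ (L * ‖θ - θ'‖ ^ γ) * φ r := by
    intro θ θ' hθ hθ' r hr
    have hr0 : (0:ℝ) < r := hr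
    have hnθ : ‖r • θ‖ = r := by
      rw [norm_smul, hθ, Real.norm_eq_abs, abs_of_pos hr0, mul_one]
    have hnθ' : ‖r • θ'‖ = r := by
      rw [norm_smul, hθ', Real.norm_eq_abs, abs_of_pos hr0, mul_one]
    have hb := hf (r • θ) (r • θ') (by rw [hnθ, hnθ'])
    rw [hnθ] at hb
    have hdiff : ‖r • θ - r • θ'‖ = r * ‖θ - θ'‖ := by
      rw [← smul_sub, norm_smul, Real.norm_eq_abs, abs_of_pos hr0]
    rw [hdiff, Real.mul_rpow hr0.le (norm_nonneg _)] at hb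
    have hrd : (0:ℝ) ≤ r ^ (d-1) := pow_nonneg hr0.le _
    have := mul_le_mul_of_nonneg_left hb hrd
    calc r ^ (d - 1) * |f (r • θ) - f (r • θ')|
        ≤ r ^ (d-1) * (L * (r ^ γ * ‖θ - θ'‖ ^ γ) / (1 + r ^ p)) := this
      _ = (L * ‖θ - θ'‖ ^ γ) * φ r := by simp only [hφdef]; ring
  -- integrability of the difference integrand
  have hIntdiff : ∀ θ θ' : EuclideanSpace ℝ (Fin d), ‖θ‖ = 1 → ‖θ'‖ = 1 →
      IntegrableOn (fun r : ℝ => r ^ (d - 1) * |f (r • θ) - f (r • θ')|) (Set.Ioi 0) := by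
    intro θ θ' hθ hθ'
    refine Integrable.mono' (hφint.const_mul (L * ‖θ - θ'‖ ^ γ)) ?_ ?_
    · exact ((measurable_id.pow_const _).mul
        (((hmeasθ θ).sub (hmeasθ θ')).abs)).aestronglyMeasurable.restrict
    · filter_upwards [ae_restrict_mem measurableSet_Ioi] with r hr
      have hr0 : (0:ℝ) < r := hr
      rw [Real.norm_eq_abs, abs_of_nonneg (by positivity)]
      exact key θ θ' hθ hθ' r hr
  refine ⟨C₀ + 1, by linarith, ?_, ?_⟩
  · intro θ θ' hθ hθ'
    have h1 : ∫ r in Set.Ioi (0:ℝ), r ^ (d - 1) * |f (r • θ) - f (r • θ')|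
        ≤ ∫ r in Set.Ioi (0:ℝ), (L * ‖θ - θ'‖ ^ γ) * φ r :=
      setIntegral_mono_on (hIntdiff θ θ' hθ hθ') (hφint.const_mul _)
        measurableSet_Ioi (key θ θ' hθ hθ')
    rw [MeasureTheory.integral_const_mul] at h1
    have hnn : (0:ℝ) ≤ L * ‖θ - θ'‖ ^ γ := by positivity
    nlinarith [h1]
  · rintro ⟨θ₀, hθ₀, hθ₀int⟩ θ θ' hθ hθ'
    -- integrability transfer
    have trans : ∀ η : EuclideanSpace ℝ (Fin d), ‖η‖ = 1 →
        IntegrableOn (fun r : ℝ => r ^ (d - 1) * f (r • η)) (Set.Ioi 0) := by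
      intro η hη
      have hdiffInt : IntegrableOn
          (fun r : ℝ => r ^ (d - 1) * (f (r • η) - f (r • θ₀))) (Set.Ioi 0) := by
        refine Integrable.mono' (hφint.const_mul (L * ‖η - θ₀‖ ^ γ)) ?_ ?_
        · exact ((measurable_id.pow_const _).mul
            ((hmeasθ η).sub (hmeasθ θ₀))).aestronglyMeasurable.restrict
        · filter_upwards [ae_restrict_mem measurableSet_Ioi] with r hr
          have hr0 : (0:ℝ) < r := hr
          have hrd : (0:ℝ) ≤ r ^ (d-1) := pow_nonneg hr0.le _
          rw [Real.norm_eq_abs, abs_mul, abs_of_nonneg hrd]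
          exact key η θ₀ hη hθ₀ r hr
      have heq : (fun r : ℝ => r ^ (d - 1) * f (r • η))
          = fun r : ℝ => r ^ (d - 1) * f (r • θ₀)
              + r ^ (d - 1) * (f (r • η) - f (r • θ₀)) := by
        funext r; ring
      rw [heq]
      exact hθ₀int.add hdiffInt
    refine ⟨trans θ hθ, ?_⟩
    rw [← integral_sub (trans θ hθ) (trans θ' hθ')]
    calc |∫ r in Set.Ioi (0:ℝ),
            (r ^ (d - 1) * f (r • θ) - r ^ (d - 1) * f (r • θ'))|
        = ‖∫ r in Set.Ioi (0:ℝ),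
            (r ^ (d - 1) * f (r • θ) - r ^ (d - 1) * f (r • θ'))‖ :=
          (Real.norm_eq_abs _).symm
      _ ≤ ∫ r in Set.Ioi (0:ℝ),
            ‖r ^ (d - 1) * f (r • θ) - r ^ (d - 1) * f (r • θ')‖ :=
          norm_integral_le_integral_norm _
      _ = ∫ r in Set.Ioi (0:ℝ), r ^ (d - 1) * |f (r • θ) - f (r • θ')| := by
          apply setIntegral_congr_fun measurableSet_Ioi
          intro r hr
          have hr0 : (0:ℝ) < r := hr
          have hrd : (0:ℝ) ≤ r ^ (d-1) := pow_nonneg hr0.le _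
          simp only [Real.norm_eq_abs, ← mul_sub, abs_mul, abs_of_nonneg hrd]
      _ ≤ (C₀ + 1) * L * ‖θ - θ'‖ ^ γ := by
          have h1 : ∫ r in Set.Ioi (0:ℝ), r ^ (d - 1) * |f (r • θ) - f (r • θ')|
              ≤ ∫ r in Set.Ioi (0:ℝ), (L * ‖θ - θ'‖ ^ γ) * φ r :=
            setIntegral_mono_on (hIntdiff θ θ' hθ hθ') (hφint.const_mul _)
              measurableSet_Ioi (key θ θ' hθ hθ')
          rw [MeasureTheory.integral_const_mul] at h1
          have hnn : (0:ℝ) ≤ L * ‖θ - θ'‖ ^ γ := by positivity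
          nlinarith [h1]
end
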